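/- arXiv:2602.11892 — 11 statements merged into one kernel-verified Lean document; each statement's English description precedes it below -/
import Mathlib

section
/- Let D be an acyclic orientation of an undirected graph G, and let D' be another orientation of G such that every vertex has the same out-degree and the same in-degree in D' as in D. Then D' = D. -/
variable {α : Type*}

/-- An oriented graph: a finite set of arcs with no loops and at most one
arc between any pair of vertices. -/
def Oriented (D : Finset (α × α)) : Prop :=
  ∀ a ∈ D, a.1 ≠ a.2 ∧ (a.2, a.1) ∉ D

/-- Out-degree of a vertex in a finite digraph. -/
def outDeg [DecidableEq α] (D : Finset (α × α)) (v : α) : ℕ :=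
  (D.filter fun a => a.1 = v).card

/-- In-degree of a vertex in a finite digraph. -/
def inDeg [DecidableEq α] (D : Finset (α × α)) (v : α) : ℕ :=
  (D.filter fun a => a.2 = v).card

/-- A digraph has a directed cycle iff some vertex reaches itself by a
nonempty directed walk. -/
def HasDirCycle (D : Finset (α × α)) : Prop :=
  ∃ v : α, Relation.TransGen (fun a b => (a, b) ∈ D) v v

/-- Two arcs have the same direction with respect to a shared vertex `v`:
both leave `v` or both enter `v`. -/
def SameDir (e f : α × α) (v : α) : Prop :=
  (e.1 = v ∧ f.1 = v) ∨ (e.2 = v ∧ f.2 = v)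

/-- An alternating closed trail: a cyclic sequence of `2m` distinct arcs
`e 0, e 1, …` (indices mod `2m`) such that consecutive arcs share a vertex
`v i` at which they have the same direction, with `v i ≠ v (i+1)`. -/
def HasAltTrail (D : Finset (α × α)) : Prop :=
  ∃ m : ℕ, 0 < m ∧ ∃ (e : ZMod (2 * m) → α × α) (v : ZMod (2 * m) → α),
    Function.Injective e ∧ (∀ i, e i ∈ D) ∧
    (∀ i, SameDir (e i) (e (i + 1)) (v i)) ∧ (∀ i, v i ≠ v (i + 1))

/-- A Bernstein oriented graph: no directed cycles and no alternating
closed trails. -/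
def Bernstein (D : Finset (α × α)) : Prop :=
  Oriented D ∧ ¬ HasDirCycle D ∧ ¬ HasAltTrail D

/-- `D` is an orientation of the simple graph `G`: every arc of `D` is an
edge of `G`, and every edge of `G` carries exactly one of the two possible
arcs. -/
def IsOrientation (G : SimpleGraph α) (D : Finset (α × α)) : Prop :=
  (∀ a ∈ D, G.Adj a.1 a.2) ∧ ∀ x y : α, G.Adj x y → ((x, y) ∈ D ↔ (y, x) ∉ D)

/-! Let `S = D \ D'` be the arcs that `D'` reverses, so that `D' \ D` is `S` reversed. Equal
out-degrees give `outDeg S = outDeg (D' \ D) = inDeg S`, so every vertex entered by an arc of `S`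
is also left by one; following such arcs inside the finite set of heads of `S` must revisit a
vertex, producing a directed cycle in `S ⊆ D` unless `S` is empty. -/

open Finset Relation

theorem exists_transGen_self_of_forall_exists_rel {r : α → α → Prop} {V : Set α}
    (hV : V.Finite) (hne : V.Nonempty) (h : ∀ v ∈ V, ∃ w ∈ V, r v w) :
    ∃ v, TransGen r v v := by
  by_contra! hacyc
  -- Without cycles, reachability is a strict order on the finite set `V`, so some vertex of `V`
  -- reaches nothing in `V`, contradicting `h`.
  have : Finite V := hV
  let R : V → V → Prop := fun a b => TransGen r b a
  have : IsTrans V R := ⟨fun _ _ _ hab hbc => hbc.trans hab⟩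
  have : Std.Irrefl R := ⟨fun a => hacyc a⟩
  obtain ⟨m, -, hmin⟩ :=
    (Finite.wellFounded_of_trans_of_irrefl R).has_min Set.univ ⟨⟨_, hne.some_mem⟩, trivial⟩
  obtain ⟨w, hwV, hw⟩ := h m m.2
  exact hmin ⟨w, hwV⟩ trivial (.single hw)

theorem HasDirCycle.mono {S D : Finset (α × α)} (hSD : S ⊆ D) (hS : HasDirCycle S) :
    HasDirCycle D :=
  let ⟨v, hv⟩ := hS
  ⟨v, TransGen.mono (fun _ _ hab => hSD hab) _ _ hv⟩

theorem hasDirCycle_of_inDeg_le_outDeg [DecidableEq α] {S : Finset (α × α)} (hS : S.Nonempty)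
    (hdeg : ∀ v, inDeg S v ≤ outDeg S v) : HasDirCycle S := by
  refine exists_transGen_self_of_forall_exists_rel (S.image Prod.snd).finite_toSet
    (hS.image Prod.snd) fun v hv => ?_
  obtain ⟨a, ha, rfl⟩ := mem_image.mp hv
  have hin : 0 < inDeg S a.2 := card_pos.mpr ⟨a, mem_filter.mpr ⟨ha, rfl⟩⟩
  obtain ⟨b, hb⟩ := card_pos.mp (hin.trans_le (hdeg a.2))
  obtain ⟨hbS, hb1⟩ := mem_filter.mp hb
  exact ⟨b.2, mem_image_of_mem _ hbS, hb1 ▸ hbS⟩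

theorem outDeg_image_swap [DecidableEq α] (S : Finset (α × α)) (v : α) :
    outDeg (S.image Prod.swap) v = inDeg S v := by
  rw [outDeg, inDeg, filter_image, card_image_of_injective _ Prod.swap_injective]
  rfl

theorem outDeg_sdiff_add_outDeg_inter [DecidableEq α] (D E : Finset (α × α)) (v : α) :
    outDeg (D \ E) v + outDeg (D ∩ E) v = outDeg D v := by
  rw [outDeg, outDeg, outDeg, filter_inter_distrib,
    ← card_sdiff_add_card_inter (D.filter fun a => a.1 = v) (E.filter fun a => a.1 = v)]
  congr 2
  ext a
  simp only [mem_sdiff, mem_filter]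
  tauto

theorem outDeg_sdiff_comm_of_outDeg_eq [DecidableEq α] {D D' : Finset (α × α)}
    (h : ∀ v, outDeg D' v = outDeg D v) (v : α) : outDeg (D' \ D) v = outDeg (D \ D') v := by
  have h' := h v
  rw [← outDeg_sdiff_add_outDeg_inter D' D, ← outDeg_sdiff_add_outDeg_inter D D',
    inter_comm] at h'
  exact Nat.add_right_cancel h'

theorem IsOrientation.sdiff_eq_image_swap_sdiff [DecidableEq α] {G : SimpleGraph α}
    {D D' : Finset (α × α)} (hD : IsOrientation G D) (hD' : IsOrientation G D') :
    D' \ D = (D \ D').image Prod.swap := by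
  ext ⟨x, y⟩
  simp only [mem_sdiff, mem_image, Prod.exists, Prod.swap_prod_mk, Prod.mk.injEq]
  constructor
  · rintro ⟨hxy', hxy⟩
    have hadj := hD'.1 _ hxy'
    exact ⟨y, x, ⟨not_not.mp (mt (hD.2 x y hadj).mpr hxy), (hD'.2 x y hadj).mp hxy'⟩, rfl, rfl⟩
  · rintro ⟨y, x, ⟨hyx, hyx'⟩, rfl, rfl⟩
    have hadj := hD.1 _ hyx
    exact ⟨not_not.mp (mt (hD'.2 y x hadj).mpr hyx'), (hD.2 y x hadj).mp hyx⟩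

/-- An acyclic orientation of a graph is determined by its in- and
out-degree sequences. -/
theorem stmt0 [DecidableEq α] (G : SimpleGraph α) (D D' : Finset (α × α))
    (hD : IsOrientation G D) (hD' : IsOrientation G D')
    (hacyc : ¬ HasDirCycle D)
    (hdeg : ∀ v : α, outDeg D' v = outDeg D v ∧ inDeg D' v = inDeg D v) :
    D' = D := by
  have hswap := hD.sdiff_eq_image_swap_sdiff hD'
  have hbalanced : ∀ v, inDeg (D \ D') v = outDeg (D \ D') v := fun v => by
    rw [← outDeg_image_swap, ← hswap]
    exact outDeg_sdiff_comm_of_outDeg_eq (fun v => (hdeg v).1) v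
  have hS : D \ D' = ∅ := by
    by_contra hne
    exact hacyc <| (hasDirCycle_of_inDeg_le_outDeg (nonempty_of_ne_empty hne)
      fun v => (hbalanced v).le).mono sdiff_subset
  have hT : D' \ D = ∅ := by rw [hswap, hS, image_empty]
  exact (sdiff_eq_empty_iff_subset.mp hT).antisymm (sdiff_eq_empty_iff_subset.mp hS)
end

section
/- Let D be an oriented graph admitting two distinct red/blue edge-colourings (R,B) and (R',B') such that for every vertex v the red out-degree, red in-degree, blue out-degree and blue in-degree of v agree between the two colourings. Then D contains an alternating closed trail. -/
/-!
If two arc sets `P ≠ P'` of `D` have the same in- and out-degree at every vertex, then at each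
vertex the arcs of `X = P \ P'` and of `Y = P' \ P` leaving it are equinumerous, and so are those
entering it. Matching them gives two involutions exchanging `X` and `Y`: `tf`, which fixes tails,
and `hf`, which fixes heads. Starting from an arc of `X` and applying `tf` and `hf` alternately,
the arcs lie alternately in `X` and `Y`, and consecutive arcs share their tail and their head in
turn. As `hf ∘ tf` is injective and maps the finite set `X` into itself, the walk closes up after
twice the period of its starting arc, without repeating an arc before. For two colourings with
equal degrees, `R ≠ R'` or `B ≠ B'`.
-/

variable {α : Type*}

open Finset Function

theorem Function.mem_periodicPts_of_mapsTo {β : Type*} {f : β → β} {s : Set β} [Finite s]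
    (hf : Injective f) (hs : Set.MapsTo f s s) {x : β} (hx : x ∈ s) : x ∈ periodicPts f :=
  (Semiconj.mapsTo_periodicPts (fun _ => hs.val_restrict_apply _))
    ((hs.restrict_inj.mpr hf.injOn).mem_periodicPts ⟨x, hx⟩)

theorem Finset.card_filter_sdiff_comm {β : Type*} [DecidableEq β] {s t : Finset β}
    {p : β → Prop} [DecidablePred p] (h : #(s.filter p) = #(t.filter p)) :
    #((s \ t).filter p) = #((t \ s).filter p) := by
  have filter_sdiff (s t : Finset β) : (s \ t).filter p = s.filter p \ t.filter p := by
    ext; simp only [mem_filter, mem_sdiff]; tauto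
  rw [filter_sdiff, filter_sdiff]
  exact card_sdiff_comm h

theorem Finset.exists_equiv_fiber_eq {β γ : Type*} [DecidableEq γ] {X Y : Finset β}
    (k : β → γ) (h : ∀ c, #(X.filter (k · = c)) = #(Y.filter (k · = c))) :
    ∃ g : X ≃ Y, ∀ a, k (g a) = k a := by
  have card_fiber (Z : Finset β) (c : γ) :
      Nat.card {a : Z // k a = c} = #(Z.filter (k · = c)) := by
    rw [← Nat.card_eq_finsetCard]
    exact Nat.card_congr <| (Equiv.subtypeSubtypeEquivSubtypeInter (· ∈ Z) (k · = c)).trans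
      (Equiv.subtypeEquivRight fun _ => by rw [mem_filter])
  have e (c : γ) : {a : X // k a = c} ≃ {b : Y // k b = c} :=
    (Finite.card_eq.mp (by rw [card_fiber, card_fiber, h c])).some
  exact ⟨Equiv.ofFiberEquiv e, Equiv.ofFiberEquiv_map e⟩

theorem Finset.exists_involutive_swap {β γ : Type*} [DecidableEq β] {X Y : Finset β}
    (hXY : Disjoint X Y) (k : β → γ) {g : X ≃ Y} (hg : ∀ a, k (g a) = k a) :
    ∃ f : β → β, Involutive f ∧ (∀ e, k (f e) = k e) ∧
      Set.MapsTo f X Y ∧ Set.MapsTo f Y X := by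
  refine ⟨fun e => if h : e ∈ X then g ⟨e, h⟩ else if h : e ∈ Y then g.symm ⟨e, h⟩ else e,
    fun e => ?_, fun e => ?_, fun e he => by simp [mem_coe.mp he], fun e he => ?_⟩
  · by_cases hX : e ∈ X
    · simp [hX, disjoint_right.mp hXY (g ⟨e, hX⟩).2]
    by_cases hY : e ∈ Y <;> simp [hX, hY]
  · by_cases hX : e ∈ X
    · simp [hX, hg]
    by_cases hY : e ∈ Y
    · simp [hX, hY, ← hg (g.symm _)]
    · simp [hX, hY]
  · simp [disjoint_right.mp hXY (mem_coe.mp he), mem_coe.mp he]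

theorem hasAltTrail_of_periodic {D : Finset (α × α)} {m : ℕ} (hm : 0 < m)
    {arc : ℕ → α × α} {vert : ℕ → α}
    (harc : Periodic arc (2 * m)) (hvert : Periodic vert (2 * m))
    (hinj : Set.InjOn arc (Set.Iio (2 * m))) (hmem : ∀ n, arc n ∈ D)
    (hdir : ∀ n, SameDir (arc n) (arc (n + 1)) (vert n))
    (hne : ∀ n, vert n ≠ vert (n + 1)) :
    HasAltTrail D := by
  have : Fact (1 < 2 * m) := ⟨by omega⟩
  have hsucc (i : ZMod (2 * m)) : (i + 1).val = (i.val + 1) % (2 * m) := by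
    rw [ZMod.val_add, ZMod.val_one]
  refine ⟨m, hm, fun i => arc i.val, fun i => vert i.val,
    fun i j h => ZMod.val_injective _ (hinj (ZMod.val_lt i) (ZMod.val_lt j) h),
    fun i => hmem _, fun i => ?_, fun i => ?_⟩
  · simpa only [hsucc, harc.map_mod_nat] using hdir i.val
  · simpa only [hsucc, hvert.map_mod_nat] using hne i.val

section AlternatingOrbit

variable (tf hf : α × α → α × α) (x : α × α)

def altArc (n : ℕ) : α × α :=
  if Even n then (hf ∘ tf)^[n / 2] x else tf ((hf ∘ tf)^[n / 2] x)

def altVert (n : ℕ) : α :=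
  if Even n then (altArc tf hf x n).1 else (altArc tf hf x n).2

variable {tf hf x}

theorem altArc_succ_of_even {n : ℕ} (hn : Even n) :
    altArc tf hf x (n + 1) = tf (altArc tf hf x n) := by
  have : (n + 1) / 2 = n / 2 := by grind
  simp [altArc, hn, this, Nat.even_add_one]

theorem altArc_succ_of_odd {n : ℕ} (hn : Odd n) :
    altArc tf hf x (n + 1) = hf (altArc tf hf x n) := by
  have : (n + 1) / 2 = n / 2 + 1 := by grind
  simp [altArc, Nat.not_even_iff_odd.mpr hn, Nat.even_add_one, this, iterate_succ_apply']

theorem altArc_periodic {p : ℕ} (hx : IsPeriodicPt (hf ∘ tf) p x) :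
    Periodic (altArc tf hf x) (2 * p) := by
  intro n
  have : (n + 2 * p) / 2 = n / 2 + p := by omega
  simp [altArc, this, iterate_add_apply, hx.eq, Nat.even_add]

theorem altVert_periodic {p : ℕ} (hx : IsPeriodicPt (hf ∘ tf) p x) :
    Periodic (altVert tf hf x) (2 * p) := by
  intro n
  simp [altVert, altArc_periodic hx n, Nat.even_add]

theorem altArc_mem {X Y : Set (α × α)} (hx : x ∈ X) (htf : Set.MapsTo tf X Y)
    (hhf : Set.MapsTo hf Y X) (n : ℕ) :
    altArc tf hf x n ∈ if Even n then X else Y := by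
  have horbit : (hf ∘ tf)^[n / 2] x ∈ X := (hhf.comp htf).iterate _ hx
  by_cases hn : Even n <;> simp [altArc, hn, horbit, htf horbit]

theorem altArc_mem_iff_even {X Y : Set (α × α)} (hXY : Disjoint X Y) (hx : x ∈ X)
    (htf : Set.MapsTo tf X Y) (hhf : Set.MapsTo hf Y X) (n : ℕ) :
    altArc tf hf x n ∈ X ↔ Even n := by
  have hmem := altArc_mem hx htf hhf n
  by_cases hn : Even n
  · simpa [hn] using hmem
  · simp only [hn, if_false] at hmem
    simpa [hn] using Set.disjoint_right.mp hXY hmem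

theorem altArc_injOn {X Y : Set (α × α)} (hXY : Disjoint X Y) (hx : x ∈ X)
    (htf : Set.MapsTo tf X Y) (hhf : Set.MapsTo hf Y X) (htf_inj : Injective tf) :
    Set.InjOn (altArc tf hf x) (Set.Iio (2 * minimalPeriod (hf ∘ tf) x)) := by
  intro i hi j hj h
  have hpar : Even i ↔ Even j := by
    rw [← altArc_mem_iff_even hXY hx htf hhf, h, altArc_mem_iff_even hXY hx htf hhf]
  have hhalf : (hf ∘ tf)^[i / 2] x = (hf ∘ tf)^[j / 2] x := by
    by_cases hie : Even i
    · simpa [altArc, hie, hpar.mp hie] using h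
    · exact htf_inj (by simpa [altArc, hie, mt hpar.mpr hie] using h)
  have := iterate_injOn_Iio_minimalPeriod (Set.mem_Iio.mpr (by simp at hi; omega))
    (Set.mem_Iio.mpr (by simp at hj; omega)) hhalf
  rw [Nat.even_iff, Nat.even_iff] at hpar
  omega

theorem sameDir_altArc_succ (htail : ∀ e, (tf e).1 = e.1) (hhead : ∀ e, (hf e).2 = e.2)
    (n : ℕ) : SameDir (altArc tf hf x n) (altArc tf hf x (n + 1)) (altVert tf hf x n) := by
  rcases Nat.even_or_odd n with hn | hn
  · simp [SameDir, altVert, hn, altArc_succ_of_even hn, htail]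
  · simp [SameDir, altVert, Nat.not_even_iff_odd.mpr hn, altArc_succ_of_odd hn, hhead]

theorem altVert_ne_succ (htail : ∀ e, (tf e).1 = e.1) (hhead : ∀ e, (hf e).2 = e.2)
    (hloop : ∀ n, (altArc tf hf x n).1 ≠ (altArc tf hf x n).2) (n : ℕ) :
    altVert tf hf x n ≠ altVert tf hf x (n + 1) := by
  rcases Nat.even_or_odd n with hn | hn
  · simpa [altVert, hn, Nat.even_add_one, altArc_succ_of_even hn, htail] using hloop (n + 1)
  · simpa [altVert, Nat.not_even_iff_odd.mpr hn, Nat.even_add_one, altArc_succ_of_odd hn,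
      hhead, eq_comm] using hloop (n + 1)

end AlternatingOrbit

theorem hasAltTrail_of_involutions {D X Y : Finset (α × α)} (hloop : ∀ a ∈ D, a.1 ≠ a.2)
    (hXD : X ⊆ D) (hYD : Y ⊆ D) (hXY : Disjoint X Y) {tf hf : α × α → α × α}
    (htf : Involutive tf) (hhf : Involutive hf)
    (htail : ∀ e, (tf e).1 = e.1) (hhead : ∀ e, (hf e).2 = e.2)
    (htXY : Set.MapsTo tf X Y) (hhYX : Set.MapsTo hf Y X) {x : α × α} (hx : x ∈ X) :
    HasAltTrail D := by
  have hXY_coe : Disjoint (X : Set (α × α)) Y := disjoint_coe.mpr hXY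
  have hmemD (n : ℕ) : altArc tf hf x n ∈ D := by
    have := altArc_mem (mem_coe.mpr hx) htXY hhYX n
    split_ifs at this
    exacts [hXD this, hYD this]
  have hper : x ∈ periodicPts (hf ∘ tf) :=
    mem_periodicPts_of_mapsTo (hhf.injective.comp htf.injective) (hhYX.comp htXY) hx
  exact hasAltTrail_of_periodic (minimalPeriod_pos_of_mem_periodicPts hper)
    (altArc_periodic (isPeriodicPt_minimalPeriod _ _))
    (altVert_periodic (isPeriodicPt_minimalPeriod _ _))
    (altArc_injOn hXY_coe hx htXY hhYX htf.injective) hmemD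
    (sameDir_altArc_succ htail hhead)
    (altVert_ne_succ htail hhead fun n => hloop _ (hmemD n))

theorem hasAltTrail_of_degree_eq [DecidableEq α] {D P P' : Finset (α × α)}
    (hloop : ∀ a ∈ D, a.1 ≠ a.2) (hPD : P ⊆ D) (hP'D : P' ⊆ D) (hne : P ≠ P')
    (hout : ∀ v, outDeg P v = outDeg P' v) (hin : ∀ v, inDeg P v = inDeg P' v) :
    HasAltTrail D := by
  have hdisj : Disjoint (P \ P') (P' \ P) := disjoint_sdiff_sdiff
  obtain ⟨gt, hgt⟩ := exists_equiv_fiber_eq Prod.fst fun v => card_filter_sdiff_comm (hout v)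
  obtain ⟨gh, hgh⟩ := exists_equiv_fiber_eq Prod.snd fun v => card_filter_sdiff_comm (hin v)
  obtain ⟨tf, htf, htail, htXY, htYX⟩ := exists_involutive_swap hdisj Prod.fst hgt
  obtain ⟨hf, hhf, hhead, hhXY, hhYX⟩ := exists_involutive_swap hdisj Prod.snd hgh
  obtain ⟨x, hx⟩ := symmDiff_nonempty.mpr hne
  rcases mem_union.mp (symmDiff_def P P' ▸ hx) with hx | hx
  · exact hasAltTrail_of_involutions hloop (sdiff_subset.trans hPD) (sdiff_subset.trans hP'D)
      hdisj htf hhf htail hhead htXY hhYX hx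
  · exact hasAltTrail_of_involutions hloop (sdiff_subset.trans hP'D) (sdiff_subset.trans hPD)
      hdisj.symm htf hhf htail hhead htYX hhXY hx

theorem stmt1_general [DecidableEq α] (D R B R' B' : Finset (α × α))
    (hor : Oriented D)
    (hRB : R ∪ B = D)
    (hRB' : R' ∪ B' = D)
    (hne : (R, B) ≠ (R', B'))
    (hdeg : ∀ v : α, outDeg R v = outDeg R' v ∧ inDeg R v = inDeg R' v ∧
      outDeg B v = outDeg B' v ∧ inDeg B v = inDeg B' v) :
    HasAltTrail D := by
  have hloop : ∀ a ∈ D, a.1 ≠ a.2 := fun a ha => (hor a ha).1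
  by_cases hR : R = R'
  · have hB : B ≠ B' := fun hB => hne (by rw [hR, hB])
    exact hasAltTrail_of_degree_eq hloop (hRB ▸ subset_union_right) (hRB' ▸ subset_union_right)
      hB (fun v => (hdeg v).2.2.1) (fun v => (hdeg v).2.2.2)
  · exact hasAltTrail_of_degree_eq hloop (hRB ▸ subset_union_left) (hRB' ▸ subset_union_left)
      hR (fun v => (hdeg v).1) (fun v => (hdeg v).2.1)

/-- If an oriented graph has two distinct red/blue colourings with the same
red/blue in- and out-degrees at every vertex, it has an alternating closed
trail. -/
theorem stmt1 [DecidableEq α] (D R B R' B' : Finset (α × α))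
    (hor : Oriented D)
    (hRB : R ∪ B = D) (hdisj : Disjoint R B)
    (hRB' : R' ∪ B' = D) (hdisj' : Disjoint R' B')
    (hne : (R, B) ≠ (R', B'))
    (hdeg : ∀ v : α, outDeg R v = outDeg R' v ∧ inDeg R v = inDeg R' v ∧
      outDeg B v = outDeg B' v ∧ inDeg B v = inDeg B' v) :
    HasAltTrail D :=
  stmt1_general D R B R' B' hor hRB hRB' hne hdeg
end

section
/- Suppose every vertex of a nonempty finite oriented graph has even out-degree and even in-degree. Then the graph contains an alternating closed trail. -/
variable {α : Type*}

/-!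
Since all degrees are even, the arcs leaving each vertex can be paired by a fixed-point-free
involution `σ`, and the arcs entering each vertex by a fixed-point-free involution `τ`.
Starting from any arc and applying `σ` and `τ` alternately traces an alternating trail, which
closes after twice the period `m` of the start arc under `τ ∘ σ`. Its `2m` arcs are distinct:
an arc at an even position reappearing at an odd one would give `(τ ∘ σ)ⁿ y = σ y`, and since
`σ ∘ (τ ∘ σ) ∘ σ = (τ ∘ σ)⁻¹` this shrinks to `σ y = y` or `τ (σ y) = σ y`. Consecutive turning
vertices are the two ends of one arc, hence distinct because there are no loops.
-/

open Function

variable {β γ : Type*}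

theorem ZMod.val_add_one_eq_mod {n : ℕ} [NeZero n] (i : ZMod n) :
    (i + 1).val = (i.val + 1) % n := by
  conv_lhs => rw [← ZMod.natCast_zmod_val i]
  rw [← Nat.cast_succ, ZMod.val_natCast]

theorem exists_involutive_forall_ne_of_even_card [Fintype β] (h : Even (Fintype.card β)) :
    ∃ σ : β → β, Involutive σ ∧ ∀ x, σ x ≠ x := by
  obtain ⟨k, hk⟩ := h
  let e : β ≃ Fin k × Bool := Fintype.equivOfCardEq (by simp [hk, mul_two])
  refine ⟨fun x => e.symm (Prod.map id not (e x)), fun x => by simp [Prod.map], fun x hx => ?_⟩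
  simpa using congrArg (fun y => (e y).2) hx

theorem exists_involutive_forall_ne_fiberwise [Fintype β] [DecidableEq γ] (f : β → γ)
    (h : ∀ c, Even (Fintype.card {x // f x = c})) :
    ∃ σ : β → β, Involutive σ ∧ (∀ x, σ x ≠ x) ∧ ∀ x, f (σ x) = f x := by
  choose s hs hs' using fun c => exists_involutive_forall_ne_of_even_card (h c)
  let σ (x : β) : β := s (f x) ⟨x, rfl⟩
  have hσ : ∀ c (y : {x // f x = c}), σ y = s c y := by
    rintro c ⟨x, rfl⟩
    rfl
  refine ⟨σ, fun x => ?_, fun x hx => hs' _ ⟨x, rfl⟩ (Subtype.ext hx),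
    fun x => (s (f x) ⟨x, rfl⟩).2⟩
  change σ (s (f x) ⟨x, rfl⟩) = x
  rw [hσ, hs]

section AlternatingWalk

variable {σ τ : β → β}

theorem iterate_comp_ne_apply (hσ : Involutive σ) (hτ : Involutive τ)
    (hσ' : ∀ y, σ y ≠ y) (hτ' : ∀ y, τ y ≠ y) : ∀ (n : ℕ) (y : β), (τ ∘ σ)^[n] y ≠ σ y
  | 0, y => (hσ' y).symm
  | 1, y => hτ' (σ y)
  | n + 2, y => fun h => iterate_comp_ne_apply hσ hτ hσ' hτ' n (τ (σ y)) <| by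
      rw [iterate_succ_apply', iterate_succ_apply, comp_apply] at h
      calc _ = σ (τ (τ (σ ((τ ∘ σ)^[n] ((τ ∘ σ) y))))) := by rw [hτ, hσ]; rfl
        _ = σ (τ (σ y)) := by rw [h]

theorem iterate_comp_apply_ne_apply_iterate (hσ : Involutive σ) (hτ : Involutive τ)
    (hσ' : ∀ y, σ y ≠ y) (hτ' : ∀ y, τ y ≠ y) (x : β) (i j : ℕ) :
    (τ ∘ σ)^[i] x ≠ σ ((τ ∘ σ)^[j] x) := by
  intro h
  rcases le_total j i with hji | hij
  · obtain ⟨d, rfl⟩ := Nat.exists_eq_add_of_le hji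
    rw [add_comm, iterate_add_apply] at h
    exact iterate_comp_ne_apply hσ hτ hσ' hτ' d _ h
  · obtain ⟨d, rfl⟩ := Nat.exists_eq_add_of_le hij
    rw [add_comm, iterate_add_apply, ← hσ.eq_iff] at h
    exact iterate_comp_ne_apply hσ hτ hσ' hτ' d _ h.symm

/-- The walk `x, σ x, τ (σ x), σ (τ (σ x)), …`. -/
def altWalk (σ τ : β → β) (x : β) (n : ℕ) : β :=
  σ^[n % 2] ((τ ∘ σ)^[n / 2] x)

theorem altWalk_succ (x : β) (n : ℕ) :
    altWalk σ τ x (n + 1) = if n % 2 = 0 then σ (altWalk σ τ x n) else τ (altWalk σ τ x n) := by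
  rcases Nat.mod_two_eq_zero_or_one n with h | h
  · simp [altWalk, h, show (n + 1) % 2 = 1 by omega, show (n + 1) / 2 = n / 2 by omega]
  · simp [altWalk, h, show (n + 1) % 2 = 0 by omega, show (n + 1) / 2 = n / 2 + 1 by omega,
      iterate_succ_apply']

theorem altWalk_periodic (x : β) : Periodic (altWalk σ τ x) (2 * minimalPeriod (τ ∘ σ) x) := by
  intro n
  simp only [altWalk, Nat.add_mul_mod_self_left, Nat.add_mul_div_left _ _ two_pos,
    iterate_add_apply, iterate_minimalPeriod]

theorem altWalk_injOn (hσ : Involutive σ) (hτ : Involutive τ)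
    (hσ' : ∀ y, σ y ≠ y) (hτ' : ∀ y, τ y ≠ y) (x : β) :
    Set.InjOn (altWalk σ τ x) (Set.Iio (2 * minimalPeriod (τ ∘ σ) x)) := by
  intro a ha b hb hab
  simp only [Set.mem_Iio] at ha hb
  have hhalf : a / 2 = b / 2 → a % 2 = b % 2 → a = b := by omega
  have hiter : (τ ∘ σ)^[a / 2] x = (τ ∘ σ)^[b / 2] x → a / 2 = b / 2 :=
    fun h => iterate_injOn_Iio_minimalPeriod (by simp only [Set.mem_Iio]; omega)
      (by simp only [Set.mem_Iio]; omega) h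
  have hne := iterate_comp_apply_ne_apply_iterate hσ hτ hσ' hτ' x
  unfold altWalk at hab
  rcases Nat.mod_two_eq_zero_or_one a with ha2 | ha2 <;>
    rcases Nat.mod_two_eq_zero_or_one b with hb2 | hb2 <;>
    simp only [ha2, hb2, iterate_zero, iterate_one, id] at hab
  · exact hhalf (hiter hab) (by omega)
  · exact absurd hab (hne _ _)
  · exact absurd hab.symm (hne _ _)
  · exact hhalf (hiter (hσ.injective hab)) (by omega)

theorem exists_injective_alternating_cycle [Finite β] (hσ : Involutive σ) (hτ : Involutive τ)
    (hσ' : ∀ y, σ y ≠ y) (hτ' : ∀ y, τ y ≠ y) (x : β) :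
    ∃ m, 0 < m ∧ ∃ e : ZMod (2 * m) → β, Injective e ∧
      ∀ i, e (i + 1) = if i.val % 2 = 0 then σ (e i) else τ (e i) := by
  have hm : 0 < minimalPeriod (τ ∘ σ) x := minimalPeriod_pos_of_mem_periodicPts
    ((hτ.injective.comp hσ.injective).mem_periodicPts x)
  have : NeZero (2 * minimalPeriod (τ ∘ σ) x) := ⟨by omega⟩
  refine ⟨_, hm, fun i => altWalk σ τ x i.val, fun i j h => ZMod.val_injective _ <|
    altWalk_injOn hσ hτ hσ' hτ' x (ZMod.val_lt i) (ZMod.val_lt j) h, fun i => ?_⟩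
  simp only [ZMod.val_add_one_eq_mod, (altWalk_periodic x).map_mod_nat, altWalk_succ]

end AlternatingWalk

theorem Fintype.card_subtype_finset_eq_card_filter (D : Finset β) (p : β → Prop)
    [DecidablePred p] :
    Fintype.card {a : D // p a} = (D.filter p).card := by
  rw [← Fintype.card_coe]
  exact Fintype.card_congr <| (Equiv.subtypeSubtypeEquivSubtypeInter (· ∈ D) p).trans
    (Equiv.subtypeEquivRight fun _ => by simp)

/-- A nonempty oriented graph in which every vertex has even out-degree and
even in-degree contains an alternating closed trail. -/
theorem stmt2 [DecidableEq α] (D : Finset (α × α)) (hor : Oriented D)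
    (hne : D.Nonempty)
    (heven : ∀ v : α, Even (outDeg D v) ∧ Even (inDeg D v)) :
    HasAltTrail D := by
  obtain ⟨x, hx⟩ := hne
  obtain ⟨σ, hσ, hσ', hσ_fst⟩ := exists_involutive_forall_ne_fiberwise (fun a : D => a.1.1)
    fun v => by rw [Fintype.card_subtype_finset_eq_card_filter D (·.1 = v)]; exact (heven v).1
  obtain ⟨τ, hτ, hτ', hτ_snd⟩ := exists_involutive_forall_ne_fiberwise (fun a : D => a.1.2)
    fun v => by rw [Fintype.card_subtype_finset_eq_card_filter D (·.2 = v)]; exact (heven v).2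
  obtain ⟨m, hm, e, he, hstep⟩ := exists_injective_alternating_cycle hσ hτ hσ' hτ' ⟨x, hx⟩
  have : NeZero (2 * m) := ⟨by omega⟩
  let v (i : ZMod (2 * m)) : α := if i.val % 2 = 0 then (e i).1.1 else (e i).1.2
  have hturn (i : ZMod (2 * m)) : SameDir (e i) (e (i + 1)) (v i) ∧ v i ≠ v (i + 1) := by
    have hpar : (i + 1).val % 2 = (i.val + 1) % 2 := by
      rw [ZMod.val_add_one_eq_mod, Nat.mod_mod_of_dvd _ (dvd_mul_right 2 m)]
    rcases Nat.mod_two_eq_zero_or_one i.val with h | h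
    · have h' : (i + 1).val % 2 = 1 := by omega
      simp only [v, SameDir, hstep i, h, h', if_true, one_ne_zero, if_false, hσ_fst, true_and,
        true_or]
      exact hσ_fst (e i) ▸ (hor _ (σ (e i)).2).1
    · have h' : (i + 1).val % 2 = 0 := by omega
      simp only [v, SameDir, hstep i, h, h', if_true, one_ne_zero, if_false, hτ_snd, true_and,
        or_true]
      exact hτ_snd (e i) ▸ (hor _ (τ (e i)).2).1.symm
  exact ⟨m, hm, fun i => (e i).1, v, Subtype.val_injective.comp he, fun i => (e i).2,
    fun i => (hturn i).1, fun i => (hturn i).2⟩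
end

section
/- Let D be a Bernstein orientation of a graph on vertex set {1,...,n} in which every edge {i,j} with i < j is oriented from i to j. Define the bipartite graph F with vertex set {a_i^+ : 1 ≤ i ≤ n-1} ∪ {a_j^- : 2 ≤ j ≤ n} and an edge {a_i^+, a_j^-} for each arc (i,j) of D. Then F is a forest. -/
/-!
A cycle of the bipartite graph `F` has even length `2m`. Read its edges as arcs of `D`: two
consecutive edges meet at a copy of some vertex `v`, and both arcs leave `v` (left copy) or both
enter `v` (right copy). Two consecutive meeting points are the ends of one arc, so the underlying
vertices differ since `D` has no loops. Hence a cycle of `F` is an alternating closed trail of `D`.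
-/

variable {α : Type*}

namespace SimpleGraph.Walk

variable {V : Type*} {G : SimpleGraph V}

lemma IsTrail.eq_of_getVert_edge_eq {u v : V} {p : G.Walk u v} (hp : p.IsTrail) {i j : ℕ}
    (hi : i < p.length) (hj : j < p.length)
    (h : s(p.getVert i, p.getVert (i + 1)) = s(p.getVert j, p.getVert (j + 1))) : i = j := by
  rw [← getElem_edges (by simpa using hi), ← getElem_edges (by simpa using hj)] at h
  exact (hp.edges_nodup.getElem_inj_iff).mp h

lemma getVert_val_add_one {u : V} (p : G.Walk u u) {N : ℕ} [NeZero N] (hN : p.length = N)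
    (i : ZMod N) : p.getVert (i + 1).val = p.getVert (i.val + 1) := by
  rw [ZMod.val_add, ZMod.val_one_eq_one_mod, Nat.add_mod_mod]
  rcases (show i.val + 1 ≤ N from i.val_lt).lt_or_eq with hlt | heq
  · rw [Nat.mod_eq_of_lt hlt]
  · rw [heq, Nat.mod_self, getVert_zero, ← hN, getVert_length]

end SimpleGraph.Walk

section ArcBipartiteGraph

variable (D : Finset (α × α))

-- `Sum.inl i` plays the role of `a_i⁺` and `Sum.inr j` that of `a_j⁻`.
def arcBipartiteGraph : SimpleGraph (α ⊕ α) :=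
  SimpleGraph.fromRel fun x y => ∃ i j, (i, j) ∈ D ∧ x = Sum.inl i ∧ y = Sum.inr j

def arcEdge (a : α × α) : Sym2 (α ⊕ α) := s(Sum.inl a.1, Sum.inr a.2)

variable {D}

lemma exists_arcEdge_eq_of_adj {x y : α ⊕ α} (h : (arcBipartiteGraph D).Adj x y) :
    ∃ a ∈ D, s(x, y) = arcEdge a := by
  obtain ⟨-, ⟨i, j, hij, rfl, rfl⟩ | ⟨i, j, hij, rfl, rfl⟩⟩ := h
  · exact ⟨(i, j), hij, rfl⟩
  · exact ⟨(i, j), hij, Sym2.eq_swap⟩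

lemma even_length_of_arcBipartiteGraph_walk {u : α ⊕ α} (p : (arcBipartiteGraph D).Walk u u) :
    Even p.length := by
  let c : (arcBipartiteGraph D).Coloring Bool := SimpleGraph.Coloring.mk Sum.isLeft fun h => by
    obtain ⟨-, ⟨i, j, -, rfl, rfl⟩ | ⟨i, j, -, rfl, rfl⟩⟩ := h <;> simp
  simpa using c.even_length_iff_congr p

lemma sameDir_of_mem_arcEdge {a b : α × α} {x : α ⊕ α} (ha : x ∈ arcEdge a)
    (hb : x ∈ arcEdge b) : SameDir a b (Sum.elim id id x) := by
  cases x <;> simp_all [arcEdge, SameDir]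

lemma elim_ne_of_arcEdge_eq {a : α × α} (ha : a.1 ≠ a.2) {x y : α ⊕ α}
    (h : s(x, y) = arcEdge a) : Sum.elim id id x ≠ Sum.elim id id y := by
  obtain ⟨rfl, rfl⟩ | ⟨rfl, rfl⟩ := Sym2.eq_iff.mp h
  · exact ha
  · exact ha.symm

theorem arcBipartiteGraph_isAcyclic (hloop : ∀ a ∈ D, a.1 ≠ a.2) (htrail : ¬ HasAltTrail D) :
    (arcBipartiteGraph D).IsAcyclic := by
  intro u p hp
  obtain ⟨m, hm⟩ := even_length_of_arcBipartiteGraph_walk p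
  have hm0 : 0 < m := by have := hp.three_le_length; omega
  have hN : p.length = 2 * m := by omega
  have : NeZero (2 * m) := ⟨by omega⟩
  have hval (i : ZMod (2 * m)) : i.val < p.length := hN.symm ▸ i.val_lt
  have hsucc := p.getVert_val_add_one hN
  have hadj (i : ZMod (2 * m)) :
      (arcBipartiteGraph D).Adj (p.getVert i.val) (p.getVert (i + 1).val) := by
    rw [hsucc]
    exact p.adj_getVert_succ (hval i)
  choose e heD hedge using fun i => exists_arcEdge_eq_of_adj (hadj i)
  refine htrail ⟨m, hm0, e, fun i => Sum.elim id id (p.getVert (i + 1).val), ?_, heD,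
    fun i => ?_, fun i => ?_⟩
  · intro i j hij
    apply ZMod.val_injective
    apply hp.isCircuit.isTrail.eq_of_getVert_edge_eq (hval i) (hval j)
    rw [← hsucc, ← hsucc, hedge, hedge, hij]
  · apply sameDir_of_mem_arcEdge <;> rw [← hedge]
    · exact Sym2.mem_mk_right _ _
    · exact Sym2.mem_mk_left _ _
  · exact elim_ne_of_arcEdge_eq (hloop _ (heD (i + 1))) (hedge (i + 1))

end ArcBipartiteGraph

theorem stmt4_general (n : ℕ) (D : Finset (Fin n × Fin n)) (hBern : Bernstein D) :
    (SimpleGraph.fromRel (fun x y : Fin n ⊕ Fin n =>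
      ∃ i j : Fin n, (i, j) ∈ D ∧ x = Sum.inl i ∧ y = Sum.inr j)).IsAcyclic :=
  arcBipartiteGraph_isAcyclic (fun a ha => (hBern.1 a ha).1) hBern.2.2

/-- If `D` is a Bernstein orientation on `Fin n` with every arc going from a
smaller to a larger vertex, then the auxiliary bipartite graph `F`
(with a left copy `a_i⁺` and a right copy `a_j⁻` of the vertices, joined
whenever `(i,j)` is an arc of `D`) is a forest. -/
theorem stmt4 (n : ℕ) (D : Finset (Fin n × Fin n)) (hBern : Bernstein D)
    (hord : ∀ a ∈ D, a.1 < a.2) :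
    (SimpleGraph.fromRel (fun x y : Fin n ⊕ Fin n =>
      ∃ i j : Fin n, (i, j) ∈ D ∧ x = Sum.inl i ∧ y = Sum.inr j)).IsAcyclic :=
  stmt4_general n D hBern
end

section
/- If a graph matroid M_n on the edge set of the complete graph K_n is an abstract 2-rigidity matroid (i.e., it has rank 2n-3 and every copy of K_4 is a circuit), then every M_n-independent graph G satisfies the Laman condition: every subset of m vertices with 2 ≤ m ≤ n spans at most 2m-3 edges of G. -/
/-- The vertex set of a graph given as a set of (undirected) edges. -/
def vertsOf {α : Type*} (G : Set (Sym2 α)) : Set α := {v | ∃ e ∈ G, v ∈ e}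

/-- The degree of a vertex in a graph given as a set of edges. -/
noncomputable def edeg {α : Type*} (G : Set (Sym2 α)) (v : α) : ℕ := {e ∈ G | v ∈ e}.ncard

/-- Laman's sparsity condition: every set of at least two vertices spans at
most `2m - 3` edges. This characterizes independence in the generic plane
rigidity matroid. -/
def Laman {n : ℕ} (G : Set (Sym2 (Fin n))) : Prop :=
  ∀ U : Finset (Fin n), 2 ≤ U.card →
    {e ∈ G | ∀ v ∈ e, v ∈ U}.ncard ≤ 2 * U.card - 3

/-- A circuit of a matroid: a dependent set all of whose proper subsets are
independent. -/
def IsCircuitIn {β : Type*} (M : Matroid β) (C : Set β) : Prop :=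
  M.Dep C ∧ ∀ D : Set β, D ⊂ C → M.Indep D

/-- The matroid `M` has rank `k` (every base has `k` elements). -/
def RankEq {β : Type*} (M : Matroid β) (k : ℕ) : Prop :=
  ∀ B : Set β, M.IsBase B → B.ncard = k

/-- The edge set of a copy of `K₄` given by an injection `f : Fin 4 ↪ Fin n`. -/
def K4Copy {n : ℕ} (f : Fin 4 ↪ Fin n) : Set (Sym2 (Fin n)) :=
  {e | ∃ u v : Fin 4, u ≠ v ∧ e = s(f u, f v)}

/-- An abstract 2-rigidity matroid on the edge set of `K_n`: its ground set
consists of all non-loop edges, it has rank `2n - 3`, and every copy of `K₄`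
is a circuit. -/
def Rigidity2Matroid {n : ℕ} (M : Matroid (Sym2 (Fin n))) : Prop :=
  M.E = {e : Sym2 (Fin n) | ¬ e.IsDiag} ∧ RankEq M (2 * n - 3) ∧
    ∀ f : Fin 4 ↪ Fin n, IsCircuitIn M (K4Copy f)

/-- A matroidal 2-rigidity family: a sequence of graph matroids of rank
`2n - 3`, symmetric and hereditary in the sense that independence is
preserved under any injection of the vertex set. -/
structure RigFamily where
  M : (n : ℕ) → Matroid (Sym2 (Fin n))
  ground : ∀ n : ℕ, (M n).E = {e : Sym2 (Fin n) | ¬ e.IsDiag}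
  rank : ∀ n : ℕ, 2 ≤ n → RankEq (M n) (2 * n - 3)
  hered : ∀ {n m : ℕ} (f : Fin n ↪ Fin m) (G : Set (Sym2 (Fin n))),
    (M n).Indep G ↔ (M m).Indep (Sym2.map (⇑f) '' G)

/-- The 0-extension property: attaching a new vertex by at most two edges to
an independent graph keeps it independent. -/
def ZeroExt (F : RigFamily) : Prop :=
  ∀ (n : ℕ) (G : Set (Sym2 (Fin n))) (v a b : Fin n),
    v ∉ vertsOf G → v ≠ a → v ≠ b →
    (F.M n).Indep G → (F.M n).Indep (G ∪ {s(v, a), s(v, b)})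

/-- Adjacency in a graph given as a set of edges. -/
def EAdj {α : Type*} (G : Set (Sym2 α)) (a b : α) : Prop := a ≠ b ∧ s(a, b) ∈ G

/-- Connectivity of a graph given as a set of edges: any two of its vertices
are joined by a walk. -/
def EConnected {α : Type*} (G : Set (Sym2 α)) : Prop :=
  ∀ u ∈ vertsOf G, ∀ w ∈ vertsOf G, Relation.ReflTransGen (EAdj G) u w

/-! Adding a vertex `w` to a vertex set `U` raises the rank of the clique on `U` by at most two:
for any two vertices `a, b ∈ U`, every edge `wp` with `p ∈ U` lies in the closure of the clique
on `U` together with `wa` and `wb`, since the `K₄` on `w, p, a, b` is a circuit. Growing `U` from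
a single edge, of rank at most one, the clique on `m` vertices has rank at most `2m - 3`, and this
bounds the number of edges of any independent graph inside it. -/

open Set

lemma IsCircuitIn.mem_closure_diff_singleton {β : Type*} {M : Matroid β} {C : Set β} {e : β}
    (hC : IsCircuitIn M C) (he : e ∈ C) : e ∈ M.closure (C \ {e}) := by
  have hI : M.Indep (C \ {e}) := hC.2 _ (sdiff_singleton_ssubset.mpr he)
  rw [hI.mem_closure_iff, insert_sdiff_singleton, insert_eq_of_mem he]
  exact Or.inl hC.1

section K4

variable {n : ℕ} {M : Matroid (Sym2 (Fin n))}

def embFin4 {a b c d : Fin n} (hab : a ≠ b) (hac : a ≠ c) (had : a ≠ d)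
    (hbc : b ≠ c) (hbd : b ≠ d) (hcd : c ≠ d) : Fin 4 ↪ Fin n :=
  ⟨![a, b, c, d], by intro i j hij; fin_cases i <;> fin_cases j <;> simp_all⟩

@[simp]
lemma embFin4_apply {a b c d : Fin n} (hab : a ≠ b) (hac : a ≠ c) (had : a ≠ d)
    (hbc : b ≠ c) (hbd : b ≠ d) (hcd : c ≠ d) (i : Fin 4) :
    embFin4 hab hac had hbc hbd hcd i = ![a, b, c, d] i :=
  rfl

lemma mem_closure_of_isCircuitIn_K4Copy
    (hK4 : ∀ f : Fin 4 ↪ Fin n, IsCircuitIn M (K4Copy f)) {a b c d : Fin n}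
    (hab : a ≠ b) (hac : a ≠ c) (had : a ≠ d) (hbc : b ≠ c) (hbd : b ≠ d) (hcd : c ≠ d) :
    s(a, b) ∈ M.closure {s(c, d), s(a, c), s(a, d), s(b, c), s(b, d)} := by
  set f := embFin4 hab hac had hbc hbd hcd
  have hab_mem : s(a, b) ∈ K4Copy f := ⟨0, 1, by decide, rfl⟩
  refine M.closure_subset_closure ?_ ((hK4 f).mem_closure_diff_singleton hab_mem)
  rintro e ⟨⟨u, v, huv, rfl⟩, hne⟩
  fin_cases u <;> fin_cases v <;> simp_all [f]

end K4

def cliqueEdges {α : Type*} (U : Finset α) : Set (Sym2 α) :=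
  {e | ¬ e.IsDiag ∧ ∀ v ∈ e, v ∈ U}

@[simp]
lemma mk_mem_cliqueEdges {α : Type*} {U : Finset α} {p q : α} :
    s(p, q) ∈ cliqueEdges U ↔ p ≠ q ∧ p ∈ U ∧ q ∈ U := by
  simp [cliqueEdges, Sym2.mk_isDiag_iff]

section Clique

variable {n : ℕ} {M : Matroid (Sym2 (Fin n))}

lemma cliqueEdges_insert_subset_closure
    (hK4 : ∀ f : Fin 4 ↪ Fin n, IsCircuitIn M (K4Copy f))
    (hE : {e : Sym2 (Fin n) | ¬ e.IsDiag} ⊆ M.E)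
    {U : Finset (Fin n)} {w a b : Fin n} (ha : a ∈ U) (hb : b ∈ U) (hab : a ≠ b) (hw : w ∉ U) :
    cliqueEdges (insert w U) ⊆ M.closure (cliqueEdges U ∪ {s(w, a), s(w, b)}) := by
  have hwa : w ≠ a := ne_of_mem_of_not_mem ha hw |>.symm
  have hwb : w ≠ b := ne_of_mem_of_not_mem hb hw |>.symm
  have hground : cliqueEdges U ∪ {s(w, a), s(w, b)} ⊆ M.E := by
    refine subset_trans ?_ hE
    rintro e (he | rfl | rfl)
    exacts [he.1, Sym2.mk_isDiag_iff.not.mpr hwa, Sym2.mk_isDiag_iff.not.mpr hwb]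
  have spoke : ∀ p ∈ U, s(w, p) ∈ M.closure (cliqueEdges U ∪ {s(w, a), s(w, b)}) := by
    intro p hp
    by_cases hpa : p = a
    · exact M.mem_closure_of_mem (by simp [hpa]) hground
    by_cases hpb : p = b
    · exact M.mem_closure_of_mem (by simp [hpb]) hground
    have hwp : w ≠ p := ne_of_mem_of_not_mem hp hw |>.symm
    refine M.closure_subset_closure ?_
      (mem_closure_of_isCircuitIn_K4Copy hK4 hwp hwa hwb hpa hpb hab)
    rintro e (rfl | rfl | rfl | rfl | rfl) <;> simp_all
  intro e he
  induction e using Sym2.ind with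
  | _ p q =>
    obtain ⟨hpq, hp, hq⟩ := mk_mem_cliqueEdges.mp he
    rw [Finset.mem_insert] at hp hq
    rcases hp with rfl | hp <;> rcases hq with rfl | hq
    · exact absurd rfl hpq
    · exact spoke q hq
    · rw [Sym2.eq_swap (a := p)]; exact spoke p hp
    · exact M.mem_closure_of_mem (Or.inl (mk_mem_cliqueEdges.mpr ⟨hpq, hp, hq⟩)) hground

lemma eRk_cliqueEdges_insert_le
    (hK4 : ∀ f : Fin 4 ↪ Fin n, IsCircuitIn M (K4Copy f))
    (hE : {e : Sym2 (Fin n) | ¬ e.IsDiag} ⊆ M.E)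
    {U : Finset (Fin n)} {w : Fin n} (hU : 2 ≤ U.card) (hw : w ∉ U) :
    M.eRk (cliqueEdges (insert w U)) ≤ M.eRk (cliqueEdges U) + 2 := by
  obtain ⟨a, ha, b, hb, hab⟩ := Finset.one_lt_card.mp hU
  calc M.eRk (cliqueEdges (insert w U))
      ≤ M.eRk (M.closure (cliqueEdges U ∪ {s(w, a), s(w, b)})) :=
        M.eRk_mono (cliqueEdges_insert_subset_closure hK4 hE ha hb hab hw)
    _ = M.eRk (cliqueEdges U ∪ {s(w, a), s(w, b)}) := M.eRk_closure_eq _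
    _ ≤ M.eRk (cliqueEdges U) + ({s(w, a), s(w, b)} : Set (Sym2 (Fin n))).encard :=
        M.eRk_union_le_eRk_add_encard _ _
    _ ≤ M.eRk (cliqueEdges U) + 2 := by
        gcongr
        exact (encard_insert_le _ _).trans (by simp; norm_num)

lemma eRk_cliqueEdges_pair_le (a b : Fin n) : M.eRk (cliqueEdges {a, b}) ≤ 1 := by
  have hsub : cliqueEdges {a, b} ⊆ {s(a, b)} := by
    intro e he
    induction e using Sym2.ind with
    | _ p q =>
      obtain ⟨hpq, hp, hq⟩ := mk_mem_cliqueEdges.mp he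
      simp only [Finset.mem_insert, Finset.mem_singleton] at hp hq
      rcases hp with rfl | rfl <;> rcases hq with rfl | rfl <;> simp_all [Sym2.eq_swap]
  calc M.eRk (cliqueEdges {a, b}) ≤ ({s(a, b)} : Set (Sym2 (Fin n))).encard :=
        (M.eRk_mono hsub).trans (M.eRk_le_encard _)
    _ = 1 := encard_singleton _

lemma eRk_cliqueEdges_add_three_le
    (hK4 : ∀ f : Fin 4 ↪ Fin n, IsCircuitIn M (K4Copy f))
    (hE : {e : Sym2 (Fin n) | ¬ e.IsDiag} ⊆ M.E)
    {U : Finset (Fin n)} (hU : 2 ≤ U.card) : M.eRk (cliqueEdges U) + 3 ≤ 2 * U.card := by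
  obtain ⟨k, hk⟩ := Nat.exists_eq_add_of_le' hU
  induction k generalizing U with
  | zero =>
    obtain ⟨a, b, -, rfl⟩ := Finset.card_eq_two.mp hk
    calc M.eRk (cliqueEdges {a, b}) + 3 ≤ 1 + 3 := by gcongr; exact eRk_cliqueEdges_pair_le a b
      _ = 2 * (({a, b} : Finset (Fin n)).card : ℕ∞) := by rw [hk]; norm_num
  | succ k ih =>
    obtain ⟨w, hw⟩ : U.Nonempty := Finset.card_pos.mp (by omega)
    have hcard : (U.erase w).card = k + 2 := by rw [Finset.card_erase_of_mem hw]; omega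
    calc M.eRk (cliqueEdges U) + 3
        = M.eRk (cliqueEdges (insert w (U.erase w))) + 3 := by rw [Finset.insert_erase hw]
      _ ≤ M.eRk (cliqueEdges (U.erase w)) + 3 + 2 := by
        rw [add_right_comm]
        gcongr
        exact eRk_cliqueEdges_insert_le hK4 hE (by omega) (Finset.notMem_erase w U)
      _ ≤ 2 * ((k + 2 : ℕ) : ℕ∞) + 2 := by gcongr; exact hcard ▸ ih (by omega) hcard
      _ = 2 * U.card := by rw [hk]; push_cast; ring

end Clique

/-- Independent graphs of any abstract 2-rigidity matroid satisfy the Laman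
condition, i.e. they are independent in the generic plane rigidity matroid. -/
theorem stmt6 (n : ℕ) (M : Matroid (Sym2 (Fin n))) (hM : Rigidity2Matroid M)
    (G : Set (Sym2 (Fin n))) (hG : M.Indep G) : Laman G := by
  obtain ⟨hE, -, hK4⟩ := hM
  intro U hU
  set S := {e ∈ G | ∀ v ∈ e, v ∈ U}
  have hS : S ⊆ cliqueEdges U := fun e ⟨heG, heU⟩ =>
    ⟨by simpa [hE] using hG.subset_ground heG, heU⟩
  have hbound : (S.ncard : ℕ∞) + 3 ≤ 2 * U.card := by
    rw [(toFinite S).cast_ncard_eq]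
    calc S.encard + 3 ≤ M.eRk (cliqueEdges U) + 3 := by
          gcongr; exact (hG.subset (sep_subset _ _)).encard_le_eRk_of_subset hS
      _ ≤ 2 * U.card := eRk_cliqueEdges_add_three_le hK4 hE.ge hU
  have : S.ncard + 3 ≤ 2 * U.card := by exact_mod_cast hbound
  omega
end

section
/- Let M be a matroidal 2-rigidity family with the 0-extension property. Then: (1) every M-circuit has minimum degree at least 3; (2) every connected graph with maximum degree at most 3 that has a vertex of degree at most 2 is M-independent; (3) every connected cubic graph that is M-dependent is an M-circuit. -/
/-! A vertex of degree at most two can be split off by the 0-extension property, so a circuit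
has none, and a graph without loops is independent as soon as it is subcubic and every vertex
reaches a vertex of degree at most two: delete such a vertex and induct. The reachability
property survives the deletion, because a walk that meets a deleted edge stops, in the smaller
graph, at a vertex that has lost an edge and therefore has degree at most two. Deleting one
edge from a connected cubic graph produces a graph of exactly this kind. -/

open Relation

section Graph

variable {α : Type*}

def ReachesLowDegree (G : Set (Sym2 α)) : Prop :=
  ∀ u ∈ vertsOf G, ∃ w, edeg G w ≤ 2 ∧ ReflTransGen (EAdj G) u w

lemma vertsOf_mono {H G : Set (Sym2 α)} (h : H ⊆ G) : vertsOf H ⊆ vertsOf G :=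
  fun _ ⟨e, he, hve⟩ => ⟨e, h he, hve⟩

lemma mem_vertsOf_of_reflTransGen {G : Set (Sym2 α)} {u w : α} (hu : u ∈ vertsOf G)
    (huw : ReflTransGen (EAdj G) u w) : w ∈ vertsOf G := by
  rcases huw.cases_tail with rfl | ⟨c, _, hcw⟩
  · exact hu
  · exact ⟨s(c, w), hcw.2, Sym2.mem_mk_right c w⟩

lemma edeg_mono [Finite α] {H G : Set (Sym2 α)} (h : H ⊆ G) (v : α) :
    edeg H v ≤ edeg G v :=
  Set.ncard_le_ncard fun _ ⟨he, hv⟩ => ⟨h he, hv⟩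

lemma edeg_lt_edeg_of_mem_diff [Finite α] {H G : Set (Sym2 α)} {e : Sym2 α} {a : α}
    (hHG : H ⊆ G) (he : e ∈ G \ H) (ha : a ∈ e) : edeg H a < edeg G a :=
  Set.ncard_lt_ncard ⟨fun _ ⟨hf, hf'⟩ => ⟨hHG hf, hf'⟩, fun h => he.2 (h ⟨he.1, ha⟩).1⟩

lemma edeg_le_three_of_cubic {G : Set (Sym2 α)} (h3 : ∀ v ∈ vertsOf G, edeg G v = 3) (v : α) :
    edeg G v ≤ 3 := by
  by_cases hv : v ∈ vertsOf G
  · exact (h3 v hv).le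
  · have : {e ∈ G | v ∈ e} = ∅ :=
      Set.eq_empty_of_forall_notMem fun e he => hv ⟨e, he.1, he.2⟩
    simp [edeg, this]

lemma Relation.ReflTransGen.exists_exit {G H : Set (Sym2 α)} {u w : α}
    (huw : ReflTransGen (EAdj G) u w) :
    ReflTransGen (EAdj H) u w ∨ ∃ a, ReflTransGen (EAdj H) u a ∧ ∃ e ∈ G \ H, a ∈ e := by
  induction huw using ReflTransGen.head_induction_on with
  | refl => exact Or.inl ReflTransGen.refl
  | @head p q hpq _ ih =>
    by_cases hH : s(p, q) ∈ H
    · rcases ih with h | ⟨a, ha, hexit⟩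
      · exact Or.inl (ReflTransGen.head ⟨hpq.1, hH⟩ h)
      · exact Or.inr ⟨a, ReflTransGen.head ⟨hpq.1, hH⟩ ha, hexit⟩
    · exact Or.inr ⟨p, ReflTransGen.refl, s(p, q), ⟨hpq.2, hH⟩, Sym2.mem_mk_left p q⟩

lemma exists_reflTransGen_edeg_le_two [Finite α] {H G : Set (Sym2 α)} {u w : α}
    (hHG : H ⊆ G) (h3 : ∀ v, edeg G v ≤ 3) (huw : ReflTransGen (EAdj G) u w)
    (hw : edeg H w ≤ 2) : ∃ w', edeg H w' ≤ 2 ∧ ReflTransGen (EAdj H) u w' := by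
  rcases huw.exists_exit (H := H) with h | ⟨a, hua, e, he, ha⟩
  · exact ⟨w, hw, h⟩
  · have := edeg_lt_edeg_of_mem_diff hHG he ha
    exact ⟨a, by linarith [h3 a], hua⟩

lemma ReachesLowDegree.mono [Finite α] {H G : Set (Sym2 α)} (hG : ReachesLowDegree G)
    (hHG : H ⊆ G) (h3 : ∀ v, edeg G v ≤ 3) : ReachesLowDegree H := by
  intro u hu
  obtain ⟨w, hw, huw⟩ := hG u (vertsOf_mono hHG hu)
  exact exists_reflTransGen_edeg_le_two hHG h3 huw ((edeg_mono hHG w).trans hw)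

lemma EConnected.reachesLowDegree_of_ssubset [Finite α] {H G : Set (Sym2 α)}
    (hG : EConnected G) (hHG : H ⊂ G) (h3 : ∀ v, edeg G v ≤ 3) : ReachesLowDegree H := by
  obtain ⟨e, he⟩ := Set.exists_of_ssubset hHG
  obtain ⟨x, hxe⟩ : ∃ x, x ∈ e := ⟨_, e.out_fst_mem⟩
  have hx : edeg H x < edeg G x := edeg_lt_edeg_of_mem_diff hHG.1 he hxe
  intro u hu
  exact exists_reflTransGen_edeg_le_two hHG.1 h3
    (hG u (vertsOf_mono hHG.1 hu) x ⟨e, he.1, hxe⟩) (by linarith [h3 x])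

lemma exists_subset_pair_of_ncard_le_two [Finite α] {S : Set (Sym2 α)} {v : α}
    (hS : ∀ e ∈ S, v ∈ e ∧ ¬ e.IsDiag) (hS2 : S.ncard ≤ 2) (hne : S.Nonempty) :
    ∃ a b, a ≠ v ∧ b ≠ v ∧ S ⊆ {s(v, a), s(v, b)} := by
  have spoke : ∀ e ∈ S, ∃ a, a ≠ v ∧ e = s(v, a) := by
    intro e he
    obtain ⟨a, rfl⟩ := Sym2.mem_iff_exists.mp (hS e he).1
    exact ⟨a, fun hav => (hS _ he).2 (Sym2.mk_isDiag_iff.mpr hav.symm), rfl⟩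
  obtain h1 | h2 : S.ncard = 1 ∨ S.ncard = 2 := by
    have := (Set.ncard_pos (s := S)).mpr hne
    omega
  · obtain ⟨e, rfl⟩ := Set.ncard_eq_one.mp h1
    obtain ⟨a, hav, rfl⟩ := spoke e rfl
    exact ⟨a, a, hav, hav, by simp⟩
  · obtain ⟨e, f, -, rfl⟩ := Set.ncard_eq_two.mp h2
    obtain ⟨a, hav, rfl⟩ := spoke e (by simp)
    obtain ⟨b, hbv, rfl⟩ := spoke f (by simp)
    exact ⟨a, b, hav, hbv, subset_rfl⟩

end Graph

section Family

variable {F : RigFamily} {n : ℕ}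

lemma RigFamily.not_isDiag_of_subset_ground {G : Set (Sym2 (Fin n))} (hG : G ⊆ (F.M n).E)
    {e : Sym2 (Fin n)} (he : e ∈ G) : ¬ e.IsDiag := by
  simpa [F.ground n] using hG he

lemma ZeroExt.indep_union (hz : ZeroExt F) {G S : Set (Sym2 (Fin n))} {v : Fin n}
    (hv : v ∉ vertsOf G) (hS : ∀ e ∈ S, v ∈ e ∧ ¬ e.IsDiag) (hS2 : S.ncard ≤ 2)
    (hG : (F.M n).Indep G) : (F.M n).Indep (G ∪ S) := by
  rcases S.eq_empty_or_nonempty with rfl | hne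
  · simpa using hG
  obtain ⟨a, b, hav, hbv, hSab⟩ := exists_subset_pair_of_ncard_le_two hS hS2 hne
  exact (hz n G v a b hv hav.symm hbv.symm hG).subset (Set.union_subset_union_right G hSab)

lemma ZeroExt.indep_of_edeg_le_two (hz : ZeroExt F) {G : Set (Sym2 (Fin n))} {v : Fin n}
    (hd : ∀ e ∈ G, ¬ e.IsDiag) (hv : edeg G v ≤ 2) (hG : (F.M n).Indep {e ∈ G | v ∉ e}) :
    (F.M n).Indep G := by
  have hsplit : G = {e ∈ G | v ∉ e} ∪ {e ∈ G | v ∈ e} := by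
    ext e; by_cases v ∈ e <;> simp [*]
  rw [hsplit]
  exact hz.indep_union (fun ⟨e, he, hve⟩ => he.2 hve) (fun e he => ⟨he.2, hd e he.1⟩) hv hG

lemma ZeroExt.indep_of_reachesLowDegree (hz : ZeroExt F) {G : Set (Sym2 (Fin n))}
    (hd : ∀ e ∈ G, ¬ e.IsDiag) (h3 : ∀ v, edeg G v ≤ 3) (hG : ReachesLowDegree G) :
    (F.M n).Indep G := by
  induction hk : G.ncard using Nat.strong_induction_on generalizing G with
  | _ k ih =>
    rcases G.eq_empty_or_nonempty with rfl | ⟨e, he⟩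
    · exact (F.M n).empty_indep
    obtain ⟨x, hxe⟩ : ∃ x, x ∈ e := ⟨_, e.out_fst_mem⟩
    have hx : x ∈ vertsOf G := ⟨e, he, hxe⟩
    obtain ⟨w, hw, hxw⟩ := hG x hx
    obtain ⟨f, hf, hwf⟩ := mem_vertsOf_of_reflTransGen hx hxw
    have hsub : {e ∈ G | w ∉ e} ⊂ G := ⟨fun e he => he.1, fun h => (h hf).2 hwf⟩
    have hdel : (F.M n).Indep {e ∈ G | w ∉ e} :=
      ih _ (hk ▸ Set.ncard_lt_ncard hsub) (fun e he => hd e he.1)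
        (fun v => (edeg_mono hsub.1 v).trans (h3 v)) (hG.mono hsub.1 h3) rfl
    exact hz.indep_of_edeg_le_two hd hw hdel

end Family

/-- For a matroidal 2-rigidity family with the 0-extension property:
(1) every circuit has minimum degree at least 3;
(2) every connected properly subcubic graph is independent;
(3) every connected cubic dependent graph is a circuit. -/
theorem stmt9 (F : RigFamily) (hz : ZeroExt F) (n : ℕ) :
    (∀ C : Set (Sym2 (Fin n)), IsCircuitIn (F.M n) C →
      ∀ v ∈ vertsOf C, 3 ≤ edeg C v) ∧
    (∀ G : Set (Sym2 (Fin n)), (∀ e ∈ G, ¬ e.IsDiag) → EConnected G →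
      (∀ v : Fin n, edeg G v ≤ 3) → (∃ v ∈ vertsOf G, edeg G v ≤ 2) →
      (F.M n).Indep G) ∧
    (∀ G : Set (Sym2 (Fin n)), EConnected G →
      (∀ v ∈ vertsOf G, edeg G v = 3) → (F.M n).Dep G →
      IsCircuitIn (F.M n) G) := by
  refine ⟨?_, ?_, ?_⟩
  · intro C ⟨hdep, hmin⟩ v ⟨e, he, hve⟩
    by_contra! hv
    exact hdep.not_indep (hz.indep_of_edeg_le_two
      (fun e he => RigFamily.not_isDiag_of_subset_ground hdep.subset_ground he)
      (by omega) (hmin _ ⟨fun e he => he.1, fun h => (h he).2 hve⟩))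
  · rintro G hd hconn h3 ⟨v, hv, hv2⟩
    exact hz.indep_of_reachesLowDegree hd h3 fun u hu => ⟨v, hv2, hconn u hu v hv⟩
  · intro G hconn h3 hdep
    exact ⟨hdep, fun D hD => hz.indep_of_reachesLowDegree
      (fun e he => RigFamily.not_isDiag_of_subset_ground hdep.subset_ground (hD.1 he))
      (fun v => (edeg_mono hD.1 v).trans (edeg_le_three_of_cubic h3 v))
      (hconn.reachesLowDegree_of_ssubset hD (edeg_le_three_of_cubic h3))⟩
end

section
/- Every connected graph in which all vertices have degree at most 3 and at least one vertex has degree at most 2 is 2-degenerate. -/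
/-!
If `s` is all of `V`, the vertex of degree at most 2 works. Otherwise connectivity gives an edge
`vw` leaving `s`, and the neighbours of `v` inside `s` then miss `w`, so there are at most
`3 - 1 = 2` of them.
-/

namespace SimpleGraph

variable {V : Type*} {G : SimpleGraph V}

theorem Preconnected.exists_adj_mem_not_mem (hG : G.Preconnected) {s : Set V} {a b : V}
    (ha : a ∈ s) (hb : b ∉ s) : ∃ v ∈ s, ∃ w ∉ s, G.Adj v w := by
  obtain ⟨d, -, hd₁, hd₂⟩ := (hG a b).some.exists_boundary_dart s ha hb
  exact ⟨d.fst, hd₁, d.snd, hd₂, d.adj⟩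

theorem card_neighborFinset_inter_lt_degree [DecidableEq V] [G.LocallyFinite] {s : Finset V}
    {v w : V} (hvw : G.Adj v w) (hw : w ∉ s) : (G.neighborFinset v ∩ s).card < G.degree v := by
  rw [← card_neighborFinset_eq_degree]
  refine Finset.card_lt_card ((Finset.ssubset_iff_of_subset Finset.inter_subset_left).2 ?_)
  exact ⟨w, (mem_neighborFinset _ _ _).2 hvw, fun h => hw (Finset.mem_inter.1 h).2⟩

end SimpleGraph

open SimpleGraph in
/-- Every connected graph with maximum degree at most 3 having a vertex of
degree at most 2 is 2-degenerate: every nonempty (induced) subgraph has a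
vertex of degree at most 2. -/
theorem stmt10 {V : Type*} [Fintype V] [DecidableEq V] (G : SimpleGraph V)
    [DecidableRel G.Adj] (hconn : G.Connected)
    (hdeg : ∀ v : V, G.degree v ≤ 3) (hv : ∃ v : V, G.degree v ≤ 2) :
    ∀ s : Finset V, s.Nonempty →
      ∃ v ∈ s, (G.neighborFinset v ∩ s).card ≤ 2 := by
  intro s ⟨a, ha⟩
  by_cases hcover : ∀ u, u ∈ s
  · obtain ⟨v, hv₂⟩ := hv
    exact ⟨v, hcover v, (Finset.card_le_card Finset.inter_subset_left).trans hv₂⟩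
  · obtain ⟨u, hu⟩ := not_forall.1 hcover
    obtain ⟨v, hvs, w, hws, hvw⟩ :=
      hconn.preconnected.exists_adj_mem_not_mem (s := (s : Set V)) ha hu
    have hlt := card_neighborFinset_inter_lt_degree hvw hws
    exact ⟨v, hvs, by have := hdeg v; omega⟩
end

section
/- (Tripling trick) Let M be a matroidal 2-rigidity family, let D be an M-circuit, and let v be a vertex of degree 3 in D. Then: (1) for any edge e of D not incident with v, the graph obtained from D by adding a new twin of v and deleting e is M-dependent; (2) for any degree-3 vertex w of D not adjacent to v, the graph obtained from D by adding a new twin of v and deleting w is M-dependent. -/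
/-- `cloneAt D v`: the graph `D ⊕ v` obtained from `D` (pushed into
`Fin (n+1)` via `Fin.castSucc`) by adding the new vertex `Fin.last n` as a
twin of `v`, i.e. joined to exactly the neighbours of `v`. -/
def cloneAt {n : ℕ} (D : Set (Sym2 (Fin n))) (v : Fin n) :
    Set (Sym2 (Fin (n + 1))) :=
  (Sym2.map Fin.castSucc '' D) ∪
    {e | ∃ u : Fin n, s(v, u) ∈ D ∧ e = s(Fin.last n, Fin.castSucc u)}

/-!
`D ⊕ v` is the union of two copies of the circuit `D`: the old one, and the one in which `v` is
replaced by its twin. They meet in `D - v`, which is independent as a proper subset of a circuit.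
By submodularity of rank, the union of two circuits meeting in an independent set has corank at
least two, so `D ⊕ v` stays dependent after deleting any one edge; this is (1). For (2), deleting
the degree-3 vertex `w` and then 0-extending back two of its three edges yields `D ⊕ v` minus the
third edge, which is dependent by (1).
-/

open Set

namespace Matroid

variable {α : Type*} {M : Matroid α} {A B I : Set α}

theorem IsCircuit.encard_add_two_le_encard_union_of_indep (hA : M.IsCircuit A)
    (hB : M.IsCircuit B) (hAB : M.Indep (A ∩ B)) (hfin : (A ∩ B).Finite) (hI : M.Indep I)
    (hIAB : I ⊆ A ∪ B) : I.encard + 2 ≤ (A ∪ B).encard := by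
  rw [← ENat.add_le_add_iff_right hfin.encard_lt_top.ne, encard_union_add_encard_inter,
    ← hA.eRk_add_one_eq, ← hB.eRk_add_one_eq, ← hAB.eRk_eq_encard]
  calc I.encard + 2 + M.eRk (A ∩ B) ≤ M.eRk (A ∩ B) + M.eRk (A ∪ B) + 2 := by
        rw [add_right_comm, add_comm _ (M.eRk _)]; gcongr; exact hI.encard_le_eRk_of_subset hIAB
    _ ≤ M.eRk A + M.eRk B + 2 := add_le_add (M.eRk_inter_add_eRk_union_le A B) le_rfl
    _ = M.eRk A + 1 + (M.eRk B + 1) := by ring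

theorem IsCircuit.dep_union_sdiff_singleton (hA : M.IsCircuit A) (hB : M.IsCircuit B)
    (hAB : M.Indep (A ∩ B)) (hfin : (A ∪ B).Finite) {x : α} (hx : x ∈ A ∪ B) :
    M.Dep ((A ∪ B) \ {x}) := by
  refine ⟨fun hI ↦ ?_, sdiff_subset.trans (union_subset hA.subset_ground hB.subset_ground)⟩
  have hle := hA.encard_add_two_le_encard_union_of_indep hB hAB
    (hfin.subset (inter_subset_left.trans subset_union_left)) hI sdiff_subset
  rw [← encard_sdiff_singleton_add_one hx,
    ENat.add_le_add_iff_left (hfin.sdiff (t := {x})).encard_lt_top.ne] at hle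
  norm_num at hle

end Matroid

theorem Set.sdiff_singleton_eq_sep_not_union {α : Type*} {X : Set α} {P : α → Prop}
    {a b c : α} (h : {x ∈ X | P x} = {a, b, c}) (hac : a ≠ c) (hbc : b ≠ c) :
    X \ {c} = {x ∈ X | ¬ P x} ∪ {a, b} := by
  ext x
  have hx := Set.ext_iff.1 h x
  simp only [mem_sep_iff, mem_insert_iff, mem_singleton_iff] at hx
  simp only [mem_sdiff, mem_singleton_iff, mem_union, mem_sep_iff, mem_insert_iff]
  by_cases hP : P x <;> grind

theorem isCircuitIn_iff {β : Type*} {M : Matroid β} {C : Set β} :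
    IsCircuitIn M C ↔ M.IsCircuit C :=
  Matroid.isCircuit_iff_forall_ssubset.symm

def incEdges {α : Type*} (G : Set (Sym2 α)) (w : α) : Set (Sym2 α) := {e ∈ G | w ∈ e}

section Twin

variable {n : ℕ}

/-- The copy of `D` under `twinEmb v` is `D` with `v` replaced by its twin `Fin.last n`. -/
def twinEmb (v : Fin n) : Fin n ↪ Fin (n + 1) :=
  Fin.castSuccEmb.trans (Equiv.swap (Fin.castSucc v) (Fin.last n)).toEmbedding

theorem twinEmb_self (v : Fin n) : twinEmb v v = Fin.last n :=
  Equiv.swap_apply_left _ _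

theorem twinEmb_of_ne {u v : Fin n} (h : u ≠ v) : twinEmb v u = Fin.castSucc u :=
  Equiv.swap_apply_of_ne_of_ne ((Fin.castSucc_injective n).ne h) (Fin.castSucc_lt_last u).ne

theorem map_twinEmb_of_notMem {v : Fin n} {e : Sym2 (Fin n)} (h : v ∉ e) :
    Sym2.map (twinEmb v) e = Sym2.map Fin.castSucc e :=
  Sym2.map_congr fun _ hu ↦ twinEmb_of_ne (ne_of_mem_of_not_mem hu h)

theorem last_notMem_map_castSucc (e : Sym2 (Fin n)) : Fin.last n ∉ Sym2.map Fin.castSucc e := by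
  simp [Sym2.mem_map, (Fin.castSucc_lt_last _).ne]

variable {D : Set (Sym2 (Fin n))} {v : Fin n}

theorem cloneAt_eq_union (hvv : s(v, v) ∉ D) :
    cloneAt D v = Sym2.map Fin.castSucc '' D ∪ Sym2.map (twinEmb v) '' D := by
  have map_twinEmb_edge : ∀ u, s(v, u) ∈ D →
      Sym2.map (twinEmb v) s(v, u) = s(Fin.last n, Fin.castSucc u) := fun u hu ↦ by
    rw [Sym2.map_mk, twinEmb_self, twinEmb_of_ne (by rintro rfl; exact hvv hu)]
  refine subset_antisymm (union_subset_union_right _ ?_) (union_subset subset_union_left ?_)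
  · rintro _ ⟨u, hu, rfl⟩
    exact ⟨s(v, u), hu, map_twinEmb_edge u hu⟩
  · rintro _ ⟨d, hd, rfl⟩
    by_cases hvd : v ∈ d
    · obtain ⟨u, rfl⟩ := Sym2.mem_iff_exists.1 hvd
      exact Or.inr ⟨u, hd, map_twinEmb_edge u hd⟩
    · exact Or.inl ⟨d, hd, (map_twinEmb_of_notMem hvd).symm⟩

theorem image_castSucc_inter_image_twinEmb :
    Sym2.map Fin.castSucc '' D ∩ Sym2.map (twinEmb v) '' D
      = Sym2.map Fin.castSucc '' {e ∈ D | v ∉ e} := by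
  refine subset_antisymm ?_ ?_
  · rintro _ ⟨⟨d', _, hd'⟩, d, hd, rfl⟩
    have hvd : v ∉ d := fun hvd ↦ last_notMem_map_castSucc d' <| by
      rw [hd']; exact Sym2.mem_map.2 ⟨v, hvd, twinEmb_self v⟩
    exact ⟨d, ⟨hd, hvd⟩, (map_twinEmb_of_notMem hvd).symm⟩
  · rintro _ ⟨d, ⟨hd, hvd⟩, rfl⟩
    exact ⟨⟨d, hd, rfl⟩, d, hd, map_twinEmb_of_notMem hvd⟩

theorem incEdges_cloneAt_castSucc {w : Fin n} (hvw : s(v, w) ∉ D) :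
    incEdges (cloneAt D v) (Fin.castSucc w) = Sym2.map Fin.castSucc '' incEdges D w := by
  refine subset_antisymm ?_ ?_
  · rintro _ ⟨⟨d, hd, rfl⟩ | ⟨u, hu, rfl⟩, hw⟩
    · obtain ⟨a, ha, haw⟩ := Sym2.mem_map.1 hw
      exact ⟨d, ⟨hd, Fin.castSucc_injective n haw ▸ ha⟩, rfl⟩
    · rcases Sym2.mem_iff.1 hw with h | h
      · exact absurd h.symm (Fin.castSucc_lt_last w).ne.symm
      · exact absurd (Fin.castSucc_injective n h ▸ hu) hvw
  · rintro _ ⟨d, ⟨hd, hwd⟩, rfl⟩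
    exact ⟨Or.inl ⟨d, hd, rfl⟩, Sym2.mem_map.2 ⟨w, hwd, rfl⟩⟩

end Twin

theorem ZeroExt.dep_of_dep_union_pair {F : RigFamily} (hz : ZeroExt F) {n : ℕ}
    {G : Set (Sym2 (Fin n))} {w a b : Fin n} (hw : ∀ e ∈ G, w ∉ e) (hwa : w ≠ a) (hwb : w ≠ b)
    (hGE : G ⊆ (F.M n).E) (h : (F.M n).Dep (G ∪ {s(w, a), s(w, b)})) : (F.M n).Dep G :=
  ⟨fun hG ↦ h.not_indep (hz n G w a b (fun ⟨e, he, hwe⟩ ↦ hw e he hwe) hwa hwb hG), hGE⟩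

namespace RigFamily

variable (F : RigFamily) {n m : ℕ}

theorem not_isDiag_of_mem_ground {e : Sym2 (Fin n)} (he : e ∈ (F.M n).E) : ¬ e.IsDiag := by
  rwa [F.ground n] at he

theorem isCircuit_image (f : Fin n ↪ Fin m) {C : Set (Sym2 (Fin n))}
    (hC : (F.M n).IsCircuit C) : (F.M m).IsCircuit (Sym2.map f '' C) := by
  rw [Matroid.isCircuit_iff_dep_forall_sdiff_singleton_indep]
  refine ⟨⟨fun h ↦ hC.not_indep ((F.hered f C).2 h), ?_⟩, ?_⟩
  · rintro _ ⟨e, he, rfl⟩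
    rw [F.ground m, mem_ofPred_eq, Sym2.isDiag_map f.injective]
    exact F.not_isDiag_of_mem_ground (hC.subset_ground he)
  · rintro _ ⟨e, he, rfl⟩
    rw [← image_singleton, ← image_sdiff (Sym2.map.injective f.injective)]
    exact (F.hered f _).1 (hC.sdiff_singleton_indep he)

variable {D : Set (Sym2 (Fin n))} {v : Fin n}

theorem dep_cloneAt_sdiff_singleton (hD : (F.M n).IsCircuit D) (hv : (incEdges D v).Nonempty)
    {x : Sym2 (Fin (n + 1))} (hx : x ∈ cloneAt D v) : (F.M (n + 1)).Dep (cloneAt D v \ {x}) := by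
  have hvv : s(v, v) ∉ D := fun h ↦
    F.not_isDiag_of_mem_ground (hD.subset_ground h) (Sym2.mk_isDiag_iff.2 rfl)
  rw [cloneAt_eq_union hvv] at hx ⊢
  refine (F.isCircuit_image Fin.castSuccEmb hD).dep_union_sdiff_singleton
    (F.isCircuit_image (twinEmb v) hD) ?_ (toFinite _) hx
  obtain ⟨e, he, hve⟩ := hv
  rw [Fin.coe_castSuccEmb, image_castSucc_inter_image_twinEmb]
  exact (F.hered Fin.castSuccEmb _).1 (hD.ssubset_indep ⟨sep_subset _ _, fun h ↦ (h he).2 hve⟩)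

theorem dep_cloneAt_sep_notMem (hz : ZeroExt F) (hD : (F.M n).IsCircuit D)
    (hv : (incEdges D v).Nonempty) {w : Fin n} (hw : edeg D w = 3) (hvw : s(v, w) ∉ D) :
    (F.M (n + 1)).Dep {e ∈ cloneAt D v | Fin.castSucc w ∉ e} := by
  obtain ⟨p, q, r, -, hpr, hqr, hpqr⟩ := ncard_eq_three.1 (hw : (incEdges D w).ncard = 3)
  replace hpqr : incEdges D w = {p, q, r} := hpqr
  have hp : p ∈ incEdges D w := hpqr ▸ by simp
  have hq : q ∈ incEdges D w := hpqr ▸ by simp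
  have hr : r ∈ incEdges D w := hpqr ▸ by simp
  obtain ⟨a, rfl⟩ := Sym2.mem_iff_exists.1 hp.2
  obtain ⟨b, rfl⟩ := Sym2.mem_iff_exists.1 hq.2
  have hwa : w ≠ a := fun h ↦ F.not_isDiag_of_mem_ground (hD.subset_ground hp.1) (by simp [h])
  have hwb : w ≠ b := fun h ↦ F.not_isDiag_of_mem_ground (hD.subset_ground hq.1) (by simp [h])
  have hmap := Sym2.map.injective (Fin.castSucc_injective n)
  have hsplit : cloneAt D v \ {Sym2.map Fin.castSucc r}
      = {e ∈ cloneAt D v | Fin.castSucc w ∉ e} ∪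
          {s(Fin.castSucc w, Fin.castSucc a), s(Fin.castSucc w, Fin.castSucc b)} := by
    refine sdiff_singleton_eq_sep_not_union ?_ (hmap.ne hpr) (hmap.ne hqr)
    show incEdges (cloneAt D v) (Fin.castSucc w) = _
    rw [incEdges_cloneAt_castSucc hvw, hpqr]
    simp only [image_insert_eq, image_singleton, Sym2.map_mk]
  have hdep := F.dep_cloneAt_sdiff_singleton hD hv (x := Sym2.map Fin.castSucc r)
    (Or.inl ⟨r, hr.1, rfl⟩)
  rw [hsplit] at hdep
  exact hz.dep_of_dep_union_pair (fun _ he ↦ he.2) ((Fin.castSucc_injective n).ne hwa)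
    ((Fin.castSucc_injective n).ne hwb) (subset_union_left.trans hdep.subset_ground) hdep

end RigFamily

/-- The tripling trick: if `D` is a circuit of a matroidal 2-rigidity family
with the 0-extension property and `v` has degree 3 in `D`, then
(1) for every edge `e` of `D` not incident with `v`, the graph `(D ⊕ v) - e`
is dependent; (2) for every degree-3 vertex `w` neither equal nor adjacent
to `v`, the graph `(D ⊕ v) - w` is dependent. -/
theorem stmt11 (F : RigFamily) (hz : ZeroExt F) (n : ℕ)
    (D : Set (Sym2 (Fin n))) (hC : IsCircuitIn (F.M n) D)
    (v : Fin n) (hv : edeg D v = 3) :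
    (∀ e ∈ D, v ∉ e →
      (F.M (n + 1)).Dep (cloneAt D v \ {Sym2.map Fin.castSucc e})) ∧
    (∀ w : Fin n, edeg D w = 3 → w ≠ v → s(v, w) ∉ D →
      (F.M (n + 1)).Dep {e ∈ cloneAt D v | Fin.castSucc w ∉ e}) := by
  rw [isCircuitIn_iff] at hC
  have hvD : (incEdges D v).Nonempty :=
    nonempty_of_ncard_ne_zero (by rw [show (incEdges D v).ncard = 3 from hv]; norm_num)
  exact ⟨fun e he _ ↦ F.dep_cloneAt_sdiff_singleton hC hvD (Or.inl ⟨e, he, rfl⟩),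
    fun _ hw _ hvw ↦ F.dep_cloneAt_sep_notMem hz hC hvD hw hvw⟩
end

section
/- Every circuit C of a matroidal 2-rigidity family M that is not a circuit of the generic plane rigidity matroid family R is R-independent; consequently |C| ≤ 2·v(C) - 3 and C has at least six vertices of degree exactly 3. -/
/-- A circuit of the generic plane rigidity matroid family `R`: a
Laman-dependent graph all of whose proper subgraphs satisfy the Laman
condition. -/
def RCircuit {n : ℕ} (C : Set (Sym2 (Fin n))) : Prop :=
  (∀ e ∈ C, ¬ e.IsDiag) ∧ ¬ Laman C ∧
    ∀ D : Set (Sym2 (Fin n)), D ⊂ C → Laman D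

/-! Restricted to the edges spanned by `m` vertices, `F.M n` is a copy of `F.M m`, of rank
`2m - 3`; so `F`-independent graphs satisfy the Laman count, and a circuit of `F` that is not an
`R`-circuit, all of whose proper subgraphs are `F`-independent, is Laman.

Every family has the 0-extension property: in `F.M (m + 1)` the edges avoiding a vertex `v` have
rank `2m - 3` while the whole matroid has rank `2m - 1`, so some base consists of a basis of them
and two edges at `v`, and a permutation fixing `v` moves these onto any prescribed pair of edges
at `v`. Hence circuits have minimum degree 3, and the degree sum `2|C| ≤ 4|V| - 6` forces at
least six vertices of degree 3. -/

open Set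

lemma Set.exists_subset_pair_of_ncard_le_two {α : Type*} {s : Set α} (hs : s.ncard ≤ 2)
    (hne : s.Nonempty) (hfin : s.Finite := by toFinite_tac) : ∃ x ∈ s, ∃ y ∈ s, s ⊆ {x, y} := by
  obtain ⟨x, hx⟩ := hne
  have hrest : (s \ {x}).ncard ≤ 1 := by
    rw [ncard_sdiff_singleton_of_mem hx]
    omega
  rcases (s \ {x}).eq_empty_or_nonempty with hempty | ⟨y, hy⟩
  · refine ⟨x, hx, x, hx, fun z hz ↦ ?_⟩
    by_contra hzx
    simp only [mem_insert_iff, mem_singleton_iff, or_self] at hzx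
    exact hempty.subset ⟨hz, hzx⟩
  · refine ⟨x, hx, y, hy.1, fun z hz ↦ ?_⟩
    by_cases hzx : z = x
    · exact Or.inl hzx
    · exact Or.inr ((ncard_le_one_iff hfin.sdiff).mp hrest ⟨hz, hzx⟩ hy)

lemma Finset.six_le_card_filter_eq_three {ι : Type*} (V : Finset ι) (d : ι → ℕ)
    (hd : ∀ i ∈ V, 3 ≤ d i) (hsum : ∑ i ∈ V, d i + 6 ≤ 4 * V.card) :
    6 ≤ (V.filter (d · = 3)).card := by
  have h : 4 * V.card ≤ ∑ i ∈ V, d i + (V.filter (d · = 3)).card := by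
    rw [Finset.card_filter, ← Finset.sum_add_distrib, mul_comm, ← smul_eq_mul,
      ← Finset.sum_const]
    refine Finset.sum_le_sum fun i hi ↦ ?_
    have := hd i hi
    split_ifs <;> omega
  omega

lemma Equiv.Perm.exists_fixing_and_sending_pair {α : Type*} [DecidableEq α] {v x y a b : α}
    (hxv : x ≠ v) (hyv : y ≠ v) (hxy : x ≠ y) (hav : a ≠ v) (hbv : b ≠ v) (hab : a ≠ b) :
    ∃ σ : Equiv.Perm α, σ v = v ∧ σ x = a ∧ σ y = b := by
  set τ := Equiv.swap x a
  have hτv : τ v = v := Equiv.swap_apply_of_ne_of_ne hxv.symm hav.symm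
  have hτy : τ y ≠ v := fun h ↦ hyv (τ.injective (h.trans hτv.symm))
  have hτx : τ x ≠ τ y := τ.injective.ne hxy
  refine ⟨τ.trans (Equiv.swap (τ y) b), ?_, ?_, ?_⟩
  · simp only [Equiv.trans_apply, hτv]
    exact Equiv.swap_apply_of_ne_of_ne hτy.symm hbv.symm
  · rw [Equiv.trans_apply, Equiv.swap_apply_of_ne_of_ne hτx]
    · exact Equiv.swap_apply_left x a
    · rw [Equiv.swap_apply_left]; exact hab
  · simp only [Equiv.trans_apply, Equiv.swap_apply_left]

lemma Sym2.mem_range_map_of_forall_mem {α β : Type*} {f : α → β} {e : Sym2 β}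
    (he : ∀ x ∈ e, x ∈ range f) : e ∈ range (Sym2.map f) := by
  induction e using Sym2.ind with
  | _ x y =>
    obtain ⟨i, rfl⟩ := he x (Sym2.mem_mk_left x y)
    obtain ⟨j, rfl⟩ := he y (Sym2.mem_mk_right _ y)
    exact ⟨s(i, j), Sym2.map_mk f i j⟩

lemma Matroid.Indep.isBasis_of_forall_ncard_le {α : Type*} [Finite α] {M : Matroid α}
    {I X : Set α} (hI : M.Indep I) (hIX : I ⊆ X)
    (hmax : ∀ J, M.Indep J → J ⊆ X → J.ncard ≤ I.ncard) (hX : X ⊆ M.E := by aesop_mat) :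
    M.IsBasis I X := by
  refine hI.isBasis_of_forall_insert hIX fun e he ↦ ?_
  rw [← not_indep_iff (insert_subset (hX he.1) hI.subset_ground)]
  intro hins
  have := hmax _ hins (insert_subset he.1 hIX)
  rw [ncard_insert_of_notMem he.2] at this
  omega

lemma Matroid.IsBasis.union_indep_of_subset {α : Type*} {M : Matroid α} {I X P D : Set α}
    (hIX : M.IsBasis I X) (hPI : M.Indep (P ∪ I)) (hXP : Disjoint X P) (hD : M.Indep D)
    (hDX : D ⊆ X) : M.Indep (P ∪ D) := by
  obtain ⟨J, hJX, hDJ⟩ := hD.subset_isBasis_of_subset hDX hIX.subset_ground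
  have hP : (M.contract X).Indep P := (hIX.contract_indep_iff_of_disjoint hXP).mpr hPI
  exact ((hJX.contract_indep_iff_of_disjoint hXP).mp hP).subset (union_subset_union_right _ hDJ)

def edgesAvoiding {α : Type*} (v : α) : Set (Sym2 α) := {e | ¬ e.IsDiag ∧ v ∉ e}

lemma Sym2.map_mem_edgesAvoiding {α β : Type*} {f : α → β} (hf : Function.Injective f)
    {e : Sym2 α} (he : ¬ e.IsDiag) {v : β} (hv : ∀ w ∈ e, f w ≠ v) :
    Sym2.map f e ∈ edgesAvoiding v := by
  refine ⟨(Sym2.isDiag_map hf).not.mpr he, fun hve ↦ ?_⟩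
  obtain ⟨w, hw, hwv⟩ := Sym2.mem_map.mp hve
  exact hv w hw hwv

lemma edeg_eq_zero_of_notMem_vertsOf {α : Type*} {G : Set (Sym2 α)} {v : α}
    (hv : v ∉ vertsOf G) : edeg G v = 0 := by
  have hempty : {e ∈ G | v ∈ e} = ∅ := eq_empty_of_forall_notMem fun e he ↦ hv ⟨e, he.1, he.2⟩
  rw [edeg, hempty, ncard_empty]

lemma sum_edeg_eq_two_mul_ncard {α : Type*} [Fintype α] {G : Set (Sym2 α)}
    (hG : ∀ e ∈ G, ¬ e.IsDiag) : ∑ v, edeg G v = 2 * G.ncard := by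
  classical
  set H := SimpleGraph.fromEdgeSet G
  have hE : H.edgeSet = G := by
    rw [SimpleGraph.edgeSet_fromEdgeSet, sdiff_eq_left, disjoint_left]
    exact fun e he hd ↦ hG e he hd
  have hdeg : ∀ v, edeg G v = H.degree v := by
    intro v
    rw [← H.card_incidenceSet_eq_degree, ← Nat.card_eq_fintype_card, edeg, ← Nat.card_coe_set_eq]
    congr
    ext e
    simp [hE]
  rw [Finset.sum_congr rfl fun v _ ↦ hdeg v, H.sum_degrees_eq_twice_card_edges,
    ← ncard_coe_finset, SimpleGraph.coe_edgeFinset, hE]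

lemma two_le_ncard_vertsOf {α : Type*} [Finite α] {G : Set (Sym2 α)}
    (hG : ∀ e ∈ G, ¬ e.IsDiag) (hne : G.Nonempty) : 2 ≤ (vertsOf G).ncard := by
  obtain ⟨e, he⟩ := hne
  induction e using Sym2.ind with
  | _ x y =>
    have hxy : x ≠ y := by simpa using hG _ he
    rw [← ncard_pair hxy]
    exact ncard_le_ncard (pair_subset ⟨_, he, Sym2.mem_mk_left x y⟩ ⟨_, he, Sym2.mem_mk_right x y⟩)

lemma Laman.ncard_le {n : ℕ} {G : Set (Sym2 (Fin n))} (hL : Laman G)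
    (hG : ∀ e ∈ G, ¬ e.IsDiag) (hne : G.Nonempty) : G.ncard ≤ 2 * (vertsOf G).ncard - 3 := by
  classical
  have h := hL (vertsOf G).toFinset
    (by rw [← ncard_eq_toFinset_card']; exact two_le_ncard_vertsOf hG hne)
  rw [← ncard_eq_toFinset_card'] at h
  convert h using 2
  ext e
  simpa using fun he v hv ↦ ⟨e, he, hv⟩

lemma six_le_ncard_edeg_eq_three {α : Type*} [Fintype α] {G : Set (Sym2 α)}
    (hG : ∀ e ∈ G, ¬ e.IsDiag) (hne : G.Nonempty) (hmin : ∀ v ∈ vertsOf G, 3 ≤ edeg G v)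
    (hcard : G.ncard ≤ 2 * (vertsOf G).ncard - 3) :
    6 ≤ {v | v ∈ vertsOf G ∧ edeg G v = 3}.ncard := by
  classical
  have hsum : ∑ v ∈ (vertsOf G).toFinset, edeg G v = 2 * G.ncard := by
    rw [← sum_edeg_eq_two_mul_ncard hG]
    exact Finset.sum_subset (Finset.subset_univ _)
      fun v _ hv ↦ edeg_eq_zero_of_notMem_vertsOf (by simpa using hv)
  have hV := two_le_ncard_vertsOf hG hne
  rw [ncard_eq_toFinset_card' (vertsOf G)] at hV hcard
  rw [ncard_eq_toFinset_card']
  convert Finset.six_le_card_filter_eq_three (vertsOf G).toFinset (edeg G)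
    (fun v hv ↦ hmin v (by simpa using hv)) (by omega) using 2
  ext v
  simp

namespace RigFamily

variable (F : RigFamily)

lemma not_isDiag_of_subset_ground_s12 {n : ℕ} {X : Set (Sym2 (Fin n))} (hX : X ⊆ (F.M n).E) :
    ∀ e ∈ X, ¬ e.IsDiag := by
  rw [F.ground] at hX
  exact hX

lemma edgesAvoiding_subset_ground {n : ℕ} (v : Fin n) : edgesAvoiding v ⊆ (F.M n).E := by
  rw [F.ground]
  exact fun e he ↦ he.1

lemma ncard_le_of_indep {m : ℕ} (hm : 2 ≤ m) {I : Set (Sym2 (Fin m))}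
    (hI : (F.M m).Indep I) : I.ncard ≤ 2 * m - 3 := by
  obtain ⟨B, hB, hIB⟩ := hI.exists_isBase_superset
  exact (ncard_le_ncard hIB).trans_eq (F.rank m hm B hB)

lemma ncard_le_of_indep_of_forall_mem_range {m n : ℕ} (hm : 2 ≤ m) (f : Fin m ↪ Fin n)
    {I : Set (Sym2 (Fin n))} (hI : (F.M n).Indep I) (hIf : ∀ e ∈ I, ∀ x ∈ e, x ∈ range f) :
    I.ncard ≤ 2 * m - 3 := by
  have himage : Sym2.map f '' (Sym2.map f ⁻¹' I) = I :=
    image_preimage_eq_of_subset fun e he ↦ Sym2.mem_range_map_of_forall_mem (hIf e he)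
  have hpre : (F.M m).Indep (Sym2.map f ⁻¹' I) := (F.hered f _).mpr (by rwa [himage])
  rw [← himage, ncard_image_of_injective _ (Sym2.map.injective f.injective)]
  exact F.ncard_le_of_indep hm hpre

lemma laman_of_indep {n : ℕ} {G : Set (Sym2 (Fin n))} (hG : (F.M n).Indep G) : Laman G := by
  intro U hU
  refine F.ncard_le_of_indep_of_forall_mem_range hU (U.orderEmbOfFin rfl).toEmbedding
    (hG.subset (sep_subset _ _)) fun e he x hx ↦ ?_
  simpa [Finset.range_orderEmbOfFin] using he.2 x hx

variable {F} {m : ℕ}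

lemma ncard_le_of_indep_of_subset_edgesAvoiding (hm : 2 ≤ m) {v : Fin (m + 1)}
    {I : Set (Sym2 (Fin (m + 1)))} (hI : (F.M (m + 1)).Indep I) (hIv : I ⊆ edgesAvoiding v) :
    I.ncard ≤ 2 * m - 3 :=
  F.ncard_le_of_indep_of_forall_mem_range hm (Fin.succAboveEmb v) hI fun e he x hx ↦ by
    simpa [Fin.range_succAbove] using fun hxv : x = v ↦ (hIv he).2 (hxv ▸ hx)

lemma isBasis_edgesAvoiding_of_ncard_eq (hm : 2 ≤ m) {v : Fin (m + 1)}
    {I : Set (Sym2 (Fin (m + 1)))} (hI : (F.M (m + 1)).Indep I) (hIv : I ⊆ edgesAvoiding v)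
    (hcard : I.ncard = 2 * m - 3) : (F.M (m + 1)).IsBasis I (edgesAvoiding v) :=
  hI.isBasis_of_forall_ncard_le hIv
    (fun _ hJ hJv ↦ hcard ▸ ncard_le_of_indep_of_subset_edgesAvoiding hm hJ hJv)
    (F.edgesAvoiding_subset_ground v)

lemma exists_indep_pair_union_of_isBasis (hm : 2 ≤ m) {v : Fin (m + 1)}
    {I : Set (Sym2 (Fin (m + 1)))} (hI : (F.M (m + 1)).IsBasis I (edgesAvoiding v))
    (hcard : I.ncard = 2 * m - 3) :
    ∃ x y, v ≠ x ∧ v ≠ y ∧ x ≠ y ∧ (F.M (m + 1)).Indep ({s(v, x), s(v, y)} ∪ I) := by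
  obtain ⟨B, hB, hIB⟩ := hI.indep.exists_isBase_superset
  have hBcard := F.rank (m + 1) (by omega) B hB
  have hdiff : (B \ I).ncard = 2 := by
    rw [ncard_sdiff hIB]
    omega
  have hat : ∀ e ∈ B \ I, ∃ x, v ≠ x ∧ e = s(v, x) := by
    rintro e ⟨heB, heI⟩
    have hnd := F.not_isDiag_of_subset_ground_s12 hB.subset_ground e heB
    have hve : v ∈ e := by
      by_contra hve
      exact heI (hI.mem_of_insert_indep ⟨hnd, hve⟩ (hB.indep.subset (insert_subset heB hIB)))
    exact ⟨_, (Sym2.other_ne hnd hve).symm, (Sym2.other_spec hve).symm⟩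
  obtain ⟨e₁, e₂, hne, hpair⟩ := ncard_eq_two.mp hdiff
  obtain ⟨x, hvx, rfl⟩ := hat e₁ (by rw [hpair]; exact mem_insert _ _)
  obtain ⟨y, hvy, rfl⟩ := hat e₂ (by rw [hpair]; exact mem_insert_of_mem _ rfl)
  refine ⟨x, y, hvx, hvy, fun hxy ↦ hne (hxy ▸ rfl), ?_⟩
  rw [← hpair, sdiff_union_of_subset hIB]
  exact hB.indep

variable (F)

lemma exists_isBasis_edgesAvoiding (hm : 2 ≤ m) (v : Fin (m + 1)) :
    ∃ I, (F.M (m + 1)).IsBasis I (edgesAvoiding v) ∧ I.ncard = 2 * m - 3 := by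
  obtain ⟨B, hB⟩ := (F.M m).exists_isBase
  set f := Fin.succAboveEmb v
  have hcard : (Sym2.map f '' B).ncard = 2 * m - 3 := by
    rw [ncard_image_of_injective _ (Sym2.map.injective f.injective)]
    exact F.rank m hm B hB
  refine ⟨_, isBasis_edgesAvoiding_of_ncard_eq hm ((F.hered f B).mp hB.indep) ?_ hcard, hcard⟩
  rintro _ ⟨e, he, rfl⟩
  exact Sym2.map_mem_edgesAvoiding f.injective (F.not_isDiag_of_subset_ground_s12 hB.subset_ground _ he)
    fun w _ ↦ Fin.succAbove_ne v w

lemma exists_isBasis_indep_pair_union (hm : 2 ≤ m) {v a b : Fin (m + 1)} (hva : v ≠ a)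
    (hvb : v ≠ b) (hab : a ≠ b) :
    ∃ I, (F.M (m + 1)).IsBasis I (edgesAvoiding v) ∧
      (F.M (m + 1)).Indep ({s(v, a), s(v, b)} ∪ I) := by
  classical
  obtain ⟨I, hI, hcard⟩ := F.exists_isBasis_edgesAvoiding hm v
  obtain ⟨x, y, hvx, hvy, hxy, hindep⟩ := exists_indep_pair_union_of_isBasis hm hI hcard
  obtain ⟨σ, hσv, hσx, hσy⟩ :=
    Equiv.Perm.exists_fixing_and_sending_pair hvx.symm hvy.symm hxy hva.symm hvb.symm hab
  have hσ := (F.hered σ.toEmbedding _).mp hindep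
  simp only [Equiv.coe_toEmbedding, image_union, image_pair, Sym2.map_mk, hσv, hσx, hσy] at hσ
  refine ⟨_, isBasis_edgesAvoiding_of_ncard_eq hm (hσ.subset subset_union_right) ?_ ?_, hσ⟩
  · rintro _ ⟨e, he, rfl⟩
    exact Sym2.map_mem_edgesAvoiding σ.injective (hI.subset he).1
      fun w hw hwv ↦ (hI.subset he).2 (σ.injective (hwv.trans hσv.symm) ▸ hw)
  · rwa [ncard_image_of_injective _ (Sym2.map.injective σ.injective)]

lemma indep_pair_union (hm : 2 ≤ m) {G : Set (Sym2 (Fin (m + 1)))} {v a b : Fin (m + 1)}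
    (hG : (F.M (m + 1)).Indep G) (hGv : G ⊆ edgesAvoiding v) (hva : v ≠ a) (hvb : v ≠ b)
    (hab : a ≠ b) : (F.M (m + 1)).Indep ({s(v, a), s(v, b)} ∪ G) := by
  obtain ⟨I, hI, hindep⟩ := F.exists_isBasis_indep_pair_union hm hva hvb hab
  refine hI.union_indep_of_subset hindep ?_ hG hGv
  rw [disjoint_right]
  rintro e (rfl | rfl) ⟨-, hv⟩ <;> exact hv (Sym2.mem_mk_left _ _)

lemma indep_ground_two : (F.M 2).Indep (F.M 2).E := by
  obtain ⟨B, hB⟩ := (F.M 2).exists_isBase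
  have hsub : (F.M 2).E.Subsingleton := by
    rw [F.ground]
    intro e he e' he'
    revert e e'
    decide
  obtain ⟨e, rfl⟩ := ncard_eq_one.mp (F.rank 2 le_rfl B hB)
  rw [hsub.eq_singleton_of_mem (hB.subset_ground (mem_singleton e))]
  exact hB.indep

theorem zeroExt : ZeroExt F := by
  intro n G v a b hvG hva hvb hG
  have hGv : G ⊆ edgesAvoiding v := fun e he ↦
    ⟨F.not_isDiag_of_subset_ground_s12 hG.subset_ground e he, fun hve ↦ hvG ⟨e, he, hve⟩⟩
  have hn : 1 < n := by
    simpa using Fintype.one_lt_card_iff_nontrivial.mpr ⟨v, a, hva⟩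
  obtain rfl | hn : n = 2 ∨ 2 < n := by omega
  · refine F.indep_ground_two.subset (union_subset hG.subset_ground ?_)
    rw [F.ground]
    rintro e (rfl | rfl) <;> simpa
  obtain ⟨m, rfl⟩ : ∃ m, n = m + 1 := ⟨n - 1, by omega⟩
  rw [union_comm]
  by_cases hab : a = b
  · subst hab
    obtain ⟨c, -, hc⟩ := Finset.exists_mem_notMem_of_card_lt_card
      (s := {v, a}) (t := Finset.univ) (by simpa using Finset.card_le_two.trans_lt hn)
    simp only [Finset.mem_insert, Finset.mem_singleton, not_or] at hc
    exact (F.indep_pair_union (by omega) hG hGv hva (Ne.symm hc.1) (Ne.symm hc.2)).subset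
      (union_subset_union_left _ (pair_subset (mem_insert _ _) (mem_insert _ _)))
  · exact F.indep_pair_union (by omega) hG hGv hva hvb hab

lemma three_le_edeg_of_isCircuitIn {n : ℕ} {C : Set (Sym2 (Fin n))}
    (hC : IsCircuitIn (F.M n) C) {v : Fin n} (hv : v ∈ vertsOf C) : 3 ≤ edeg C v := by
  by_contra! hdeg
  obtain ⟨e₀, he₀, hve₀⟩ := hv
  obtain ⟨e₁, ⟨he₁, hv₁⟩, e₂, ⟨he₂, hv₂⟩, hat⟩ :=
    exists_subset_pair_of_ncard_le_two (s := {e ∈ C | v ∈ e}) (by rw [edeg] at hdeg; omega)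
      ⟨e₀, he₀, hve₀⟩
  have hloop := F.not_isDiag_of_subset_ground_s12 hC.1.subset_ground
  have hD : (F.M n).Indep {e ∈ C | v ∉ e} :=
    hC.2 _ ⟨sep_subset _ _, fun hsub ↦ (hsub he₀).2 hve₀⟩
  have hext := F.zeroExt n _ v _ _ (fun ⟨e, he, hve⟩ ↦ he.2 hve)
    (Sym2.other_ne (hloop _ he₁) hv₁).symm (Sym2.other_ne (hloop _ he₂) hv₂).symm hD
  rw [Sym2.other_spec, Sym2.other_spec] at hext
  refine hC.1.not_indep (hext.subset fun e he ↦ ?_)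
  by_cases hve : v ∈ e
  · exact Or.inr (hat ⟨he, hve⟩)
  · exact Or.inl ⟨he, hve⟩

end RigFamily

/-- Every circuit of a matroidal 2-rigidity family which is not an
`R`-circuit is `R`-independent; in particular it has at most `2v - 3` edges
and at least six vertices of degree exactly 3. -/
theorem stmt12 (F : RigFamily) (n : ℕ) (C : Set (Sym2 (Fin n)))
    (hC : IsCircuitIn (F.M n) C) (hnotR : ¬ RCircuit C) :
    Laman C ∧ C.ncard ≤ 2 * (vertsOf C).ncard - 3 ∧
      6 ≤ {v : Fin n | v ∈ vertsOf C ∧ edeg C v = 3}.ncard := by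
  have hloop := F.not_isDiag_of_subset_ground_s12 hC.1.subset_ground
  have hLaman : Laman C := by
    by_contra hL
    exact hnotR ⟨hloop, hL, fun D hD ↦ F.laman_of_indep (hC.2 D hD)⟩
  have hne : C.Nonempty :=
    nonempty_iff_ne_empty.mpr fun h ↦ hC.1.not_indep (h ▸ (F.M n).empty_indep)
  have hcard := hLaman.ncard_le hloop hne
  exact ⟨hLaman, hcard,
    six_le_ncard_edeg_eq_three hloop hne (fun _ hv ↦ F.three_le_edeg_of_isCircuitIn hC hv) hcard⟩
end

section
/- Let H be a connected cubic graph, H ≠ K_4 and H ≠ K_{3,3}. Then H has a vertex with no twin, i.e., a vertex v such that no other vertex has the same neighbourhood as v. -/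
/-!
Suppose every vertex has a twin. A twin of a neighbour of `u` is again a neighbour of `u`, so
pairing up the at most three neighbours of `u` forces them all to share one neighbourhood.
Propagating this along walks from an edge `ua`, every vertex has the neighbourhood of `u` or
that of `a`, so the graph is complete bipartite between `N(u)` and its complement; in a
cubic graph both sides have three vertices, giving `K_{3,3}`.
-/

open Finset

theorem Finset.apply_eq_apply_of_card_le_three {α β : Type*} [DecidableEq α]
    {s : Finset α} (f : α → β) (hs : #s ≤ 3)
    (h : ∀ x ∈ s, ∃ y ∈ s, y ≠ x ∧ f y = f x)
    {x y : α} (hx : x ∈ s) (hy : y ∈ s) : f x = f y := by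
  by_contra hxy
  obtain ⟨x', hx', hx'x, hfx'⟩ := h x hx
  obtain ⟨y', hy', hy'y, hfy'⟩ := h y hy
  have hsub : {x, x', y, y'} ⊆ s := by simp [insert_subset_iff, hx, hx', hy, hy']
  have hcard : #({x, x', y, y'} : Finset α) = 4 := by
    rw [card_eq_four]
    refine ⟨x, x', y, y', ?_, ?_, ?_, ?_, ?_, ?_, rfl⟩ <;> rintro rfl <;> simp_all
  have := card_le_card hsub
  omega

namespace SimpleGraph

variable {V : Type*} {G : SimpleGraph V}

theorem neighborSet_eq_of_adj_of_adj [DecidableEq V] [G.LocallyFinite]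
    (htwin : ∀ v, ∃ w, w ≠ v ∧ G.neighborSet w = G.neighborSet v) {u v w : V}
    (hu : G.degree u ≤ 3) (hv : G.Adj u v) (hw : G.Adj u w) :
    G.neighborSet v = G.neighborSet w := by
  refine Finset.apply_eq_apply_of_card_le_three G.neighborSet (s := G.neighborFinset u)
    (by rwa [card_neighborFinset_eq_degree]) (fun x hx => ?_) (by simpa) (by simpa)
  obtain ⟨y, hyx, hy⟩ := htwin x
  have hyu : u ∈ G.neighborSet y := hy ▸ ((G.mem_neighborFinset u x).mp hx).symm
  exact ⟨y, by simpa using hyu.symm, hyx, hy⟩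

theorem not_adj_of_neighborSet_eq {x y : V} (h : G.neighborSet x = G.neighborSet y) :
    ¬ G.Adj x y :=
  fun hxy => G.irrefl (h ▸ hxy : y ∈ G.neighborSet y)

theorem Connected.neighborSet_eq_or_eq (hG : G.Connected)
    (h : ∀ u v w, G.Adj u v → G.Adj u w → G.neighborSet v = G.neighborSet w)
    {u a : V} (hua : G.Adj u a) (z : V) :
    G.neighborSet z = G.neighborSet u ∨ G.neighborSet z = G.neighborSet a := by
  suffices ∀ x (p : G.Walk x z), G.neighborSet x = G.neighborSet u ∨
      G.neighborSet x = G.neighborSet a → G.neighborSet z = G.neighborSet u ∨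
      G.neighborSet z = G.neighborSet a from this u (hG u z).some (.inl rfl)
  intro x p
  induction p with
  | nil => exact id
  | @cons x y _ hxy _ ih =>
    rintro (hx | hx)
    · exact ih (.inr (h u y a (hx ▸ hxy : y ∈ G.neighborSet u) hua))
    · exact ih (.inl (h a y u (hx ▸ hxy : y ∈ G.neighborSet a) hua.symm))

theorem Connected.adj_iff_adj_iff_not_adj (hG : G.Connected)
    (h : ∀ u v w, G.Adj u v → G.Adj u w → G.neighborSet v = G.neighborSet w)
    {u a : V} (hua : G.Adj u a) (x y : V) : G.Adj x y ↔ (G.Adj u x ↔ ¬ G.Adj u y) := by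
  have side : ∀ z, (G.Adj u z → G.neighborSet z = G.neighborSet a) ∧
      (¬ G.Adj u z → G.neighborSet z = G.neighborSet u) := by
    intro z
    rcases hG.neighborSet_eq_or_eq h hua z with hz | hz
    · exact ⟨fun huz => absurd huz (not_adj_of_neighborSet_eq hz.symm), fun _ => hz⟩
    · have huz : u ∈ G.neighborSet z := hz ▸ hua.symm
      exact ⟨fun _ => hz, fun hnot => absurd huz.symm hnot⟩
  by_cases hux : G.Adj u x <;> by_cases huy : G.Adj u y <;>
    simp only [hux, huy, not_true_eq_false, not_false_eq_true, iff_true, iff_false]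
  · exact not_adj_of_neighborSet_eq (((side x).1 hux).trans ((side y).1 huy).symm)
  · exact (G.adj_comm x y).mpr ((side y).2 huy ▸ hux : x ∈ G.neighborSet y)
  · exact ((side x).2 hux ▸ huy : y ∈ G.neighborSet x)
  · exact not_adj_of_neighborSet_eq (((side x).2 hux).trans ((side y).2 huy).symm)

def isoCompleteBipartiteGraphOfAdjIff (p : V → Prop) [DecidablePred p]
    (h : ∀ x y, G.Adj x y ↔ (p x ↔ ¬ p y)) :
    G ≃g completeBipartiteGraph {x // p x} {x // ¬ p x} where
  toEquiv := (Equiv.sumCompl p).symm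
  map_rel_iff' {x y} := by
    rw [h]
    by_cases hx : p x <;> by_cases hy : p y <;>
      simp [Equiv.sumCompl_symm_apply_of_pos, Equiv.sumCompl_symm_apply_of_neg, hx, hy]

end SimpleGraph

open SimpleGraph

theorem stmt15_general {V : Type*} [Fintype V] [DecidableEq V] (H : SimpleGraph V)
    [DecidableRel H.Adj] (hconn : H.Connected)
    (hcubic : ∀ v : V, H.degree v = 3)
    (hK33 : ¬ Nonempty (H ≃g completeBipartiteGraph (Fin 3) (Fin 3))) :
    ∃ v : V, ∀ u : V, u ≠ v → H.neighborSet u ≠ H.neighborSet v := by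
  by_contra! htwin
  obtain ⟨u⟩ := hconn.nonempty
  obtain ⟨a, hua⟩ := H.degree_pos_iff_exists_adj u |>.mp (by rw [hcubic]; norm_num)
  have hbip := hconn.adj_iff_adj_iff_not_adj
    (fun u _ _ => neighborSet_eq_of_adj_of_adj htwin (hcubic u).le) hua
  have hleft : Fintype.card {x // H.Adj u x} = 3 := by
    rw [← hcubic u, ← card_neighborSet_eq_degree]; rfl
  have hright : Fintype.card {x // ¬ H.Adj u x} = 3 := by
    rw [← hcubic a, ← card_neighborSet_eq_degree]
    exact Fintype.card_congr (Equiv.subtypeEquivRight fun y => by simp [hbip a y, hua])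
  exact hK33 ⟨(isoCompleteBipartiteGraphOfAdjIff _ hbip).trans
    (completeBipartiteGraphCongr (Fintype.equivFinOfCardEq hleft)
      (Fintype.equivFinOfCardEq hright))⟩

/-- Every connected cubic graph other than `K₄` and `K_{3,3}` has a vertex
with no twin: no other vertex has the same neighbourhood. -/
theorem stmt15 {V : Type*} [Fintype V] [DecidableEq V] (H : SimpleGraph V)
    [DecidableRel H.Adj] (hconn : H.Connected)
    (hcubic : ∀ v : V, H.degree v = 3)
    (hK4 : ¬ Nonempty (H ≃g (⊤ : SimpleGraph (Fin 4))))
    (hK33 : ¬ Nonempty (H ≃g completeBipartiteGraph (Fin 3) (Fin 3))) :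
    ∃ v : V, ∀ u : V, u ≠ v → H.neighborSet u ≠ H.neighborSet v :=
  stmt15_general H hconn hcubic hK33
end

section
/- Let H be a connected cubic graph other than K_4 and K_{3,3}, let v be a vertex of H with no twin, and let e = {w_1, w_2} be an edge of H disjoint from v and its three neighbours. Then the graph G obtained from H by adding a new twin of v and deleting the edge e contains no subgraph isomorphic to K_4 and no subgraph isomorphic to K_{3,3}. -/
/-!
Forgetting which copy of `v` a vertex is, i.e. sending the new twin to `v`, is a homomorphism
from `(H ⊕ v) - e` to `H`. A `K₄` maps to a `K₄` of `H`, since adjacent vertices stay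
distinct. A `K_{3,3}` can only collapse if the twin and `v` lie on the same side; then the
other side consists of the three neighbours of `v`, so each vertex of the twin's side has
the neighbourhood of `v`, and since `v` has no twin in the cubic graph `H`, that whole side
would consist of copies of `v`, of which there are only two.
-/

/-- The graph `(H ⊕ v) - e` on `Option V`: add a new twin `none` of `v`
(joined to exactly the neighbours of `v`) and delete the edge `{w₁, w₂}`. -/
def cloneMinusEdge {V : Type*} (H : SimpleGraph V) (v w₁ w₂ : V) :
    SimpleGraph (Option V) :=
  SimpleGraph.fromRel fun a b =>
    (∃ x y : V, a = some x ∧ b = some y ∧ H.Adj x y ∧ s(x, y) ≠ s(w₁, w₂)) ∨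
    (a = none ∧ ∃ y : V, b = some y ∧ H.Adj v y)

namespace SimpleGraph

variable {V α : Type*} {G : SimpleGraph V}

lemma injective_of_pairwise_adj {f : α → V} (h : ∀ a b, a ≠ b → G.Adj (f a) (f b)) :
    Function.Injective f := by
  intro a b hab
  by_contra hne
  exact (h a b hne).ne hab

lemma neighborSet_eq_range_of_injective {x : V} [Fintype (G.neighborSet x)] {n : ℕ}
    (hx : G.degree x ≤ n) {y : Fin n → V} (hy : Function.Injective y)
    (hadj : ∀ i, G.Adj x (y i)) : G.neighborSet x = Set.range y := by
  have hsub : Finset.univ.map ⟨y, hy⟩ ⊆ G.neighborFinset x := by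
    intro z hz
    obtain ⟨i, -, rfl⟩ := Finset.mem_map.1 hz
    simpa using hadj i
  have hcard : (G.neighborFinset x).card ≤ (Finset.univ.map ⟨y, hy⟩).card := by
    simpa using hx
  rw [← coe_neighborFinset, ← Finset.eq_of_subset_of_card_le hsub hcard]
  simp

lemma eq_of_forall_adj_of_injective [G.LocallyFinite] {x v : V} {n : ℕ}
    (hx : G.degree x ≤ n) (hv : G.degree v ≤ n)
    (hnotwin : ∀ u, u ≠ v → G.neighborSet u ≠ G.neighborSet v)
    {y : Fin n → V} (hy : Function.Injective y)
    (hxy : ∀ i, G.Adj x (y i)) (hvy : ∀ i, G.Adj v (y i)) : x = v := by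
  by_contra hne
  exact hnotwin x hne <| (neighborSet_eq_range_of_injective hx hy hxy).trans
    (neighborSet_eq_range_of_injective hv hy hvy).symm

end SimpleGraph

open SimpleGraph

def cloneMinusEdgeHom {V : Type*} (H : SimpleGraph V) (v w₁ w₂ : V) :
    cloneMinusEdge H v w₁ w₂ →g H where
  toFun o := o.getD v
  map_rel' {a b} h := by
    rw [cloneMinusEdge, fromRel_adj] at h
    obtain ⟨-, (⟨x, y, rfl, rfl, hxy, -⟩ | ⟨rfl, y, rfl, hvy⟩) |
      (⟨x, y, rfl, rfl, hxy, -⟩ | ⟨rfl, y, rfl, hvy⟩)⟩ := h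
    exacts [hxy, hvy, hxy.symm, hvy.symm]

section cloneMinusEdge

variable {V : Type*} {H : SimpleGraph V} {v w₁ w₂ : V}

@[simp]
lemma cloneMinusEdgeHom_apply (o : Option V) : cloneMinusEdgeHom H v w₁ w₂ o = o.getD v :=
  rfl

lemma cloneMinusEdgeHom_injective_of_forall_adj [H.LocallyFinite]
    (hdeg : ∀ u, H.degree u ≤ 3) (hnotwin : ∀ u, u ≠ v → H.neighborSet u ≠ H.neighborSet v)
    {L R : Fin 3 → Option V} (hL : Function.Injective L) (hR : Function.Injective R)
    (hadj : ∀ i j, (cloneMinusEdge H v w₁ w₂).Adj (L i) (R j)) :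
    Function.Injective (cloneMinusEdgeHom H v w₁ w₂ ∘ L) := by
  set φ := cloneMinusEdgeHom H v w₁ w₂
  by_cases hnone : ∃ i, L i = none
  · exfalso
    obtain ⟨i₀, hi₀⟩ := hnone
    have hRsome : ∀ j, some (φ (R j)) = R j := fun j =>
      Option.getD_of_ne_none (hi₀ ▸ hadj i₀ j).ne.symm v
    have hy : Function.Injective (φ ∘ R) := fun j j' h => hR <| by
      rw [← hRsome j, ← hRsome j']
      exact congrArg some h
    have hvy : ∀ j, H.Adj v (φ (R j)) := fun j => by
      simpa [φ, hi₀] using φ.map_adj (hadj i₀ j)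
    have hLv : ∀ i, φ (L i) = v := fun i =>
      eq_of_forall_adj_of_injective (hdeg _) (hdeg v) hnotwin hy
        (fun j => φ.map_adj (hadj i j)) hvy
    have hL' : ∀ i, L i = none ∨ L i = some v := fun i => by
      have := hLv i
      cases h : L i <;> simp_all [φ]
    -- pigeonhole: the three vertices `L i` lie among the two copies of `v`
    have hisSome : Function.Injective fun i => (L i).isSome := fun i i' h => hL <| by
      rcases hL' i with hi | hi <;> rcases hL' i' with hi' | hi' <;> simp_all
    simpa using Fintype.card_le_of_injective _ hisSome
  · push Not at hnone
    exact fun i i' h => hL <| by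
      rw [← Option.getD_of_ne_none (hnone i) v, ← Option.getD_of_ne_none (hnone i') v]
      exact congrArg some h

end cloneMinusEdge

theorem stmt16_general {V : Type*} [Fintype V] (H : SimpleGraph V)
    [DecidableRel H.Adj]
    (hcubic : ∀ v : V, H.degree v = 3)
    (hK4free : ¬ ∃ f : Fin 4 → V, Function.Injective f ∧
      ∀ a b : Fin 4, a ≠ b → H.Adj (f a) (f b))
    (hK33free : ¬ ∃ f : Fin 3 ⊕ Fin 3 → V, Function.Injective f ∧
      ∀ a b : Fin 3, H.Adj (f (Sum.inl a)) (f (Sum.inr b)))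
    (v : V) (hvnotwin : ∀ u : V, u ≠ v → H.neighborSet u ≠ H.neighborSet v)
    (w₁ w₂ : V) :
    (¬ ∃ f : Fin 4 → Option V, Function.Injective f ∧
      ∀ a b : Fin 4, a ≠ b → (cloneMinusEdge H v w₁ w₂).Adj (f a) (f b)) ∧
    (¬ ∃ f : Fin 3 ⊕ Fin 3 → Option V, Function.Injective f ∧
      ∀ a b : Fin 3,
        (cloneMinusEdge H v w₁ w₂).Adj (f (Sum.inl a)) (f (Sum.inr b))) := by
  set φ := cloneMinusEdgeHom H v w₁ w₂
  have hdeg : ∀ u, H.degree u ≤ 3 := fun u => (hcubic u).le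
  constructor
  · rintro ⟨f, -, hf⟩
    have hφf : ∀ a b, a ≠ b → H.Adj (φ (f a)) (φ (f b)) := fun a b h => φ.map_adj (hf a b h)
    exact hK4free ⟨φ ∘ f, injective_of_pairwise_adj hφf, hφf⟩
  · rintro ⟨f, hf, hadj⟩
    refine hK33free ⟨φ ∘ f, ?_, fun a b => φ.map_adj (hadj a b)⟩
    rw [← Sum.elim_comp_inl_inr (φ ∘ f)]
    exact Function.Injective.sumElim
      (cloneMinusEdgeHom_injective_of_forall_adj hdeg hvnotwin
        (hf.comp Sum.inl_injective) (hf.comp Sum.inr_injective) hadj)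
      (cloneMinusEdgeHom_injective_of_forall_adj hdeg hvnotwin
        (hf.comp Sum.inr_injective) (hf.comp Sum.inl_injective) fun i j => (hadj j i).symm)
      fun a b => (φ.map_adj (hadj a b)).ne

/-- Let `H` be a connected cubic graph with no `K₄` and no `K_{3,3}`
subgraph, `v` a vertex with no twin, and `e = {w₁, w₂}` an edge disjoint
from `v` and its neighbours. Then `(H ⊕ v) - e` contains no subgraph
isomorphic to `K₄` or `K_{3,3}`. -/
theorem stmt16 {V : Type*} [Fintype V] [DecidableEq V] (H : SimpleGraph V)
    [DecidableRel H.Adj] (hconn : H.Connected)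
    (hcubic : ∀ v : V, H.degree v = 3)
    (hK4free : ¬ ∃ f : Fin 4 → V, Function.Injective f ∧
      ∀ a b : Fin 4, a ≠ b → H.Adj (f a) (f b))
    (hK33free : ¬ ∃ f : Fin 3 ⊕ Fin 3 → V, Function.Injective f ∧
      ∀ a b : Fin 3, H.Adj (f (Sum.inl a)) (f (Sum.inr b)))
    (v : V) (hvnotwin : ∀ u : V, u ≠ v → H.neighborSet u ≠ H.neighborSet v)
    (w₁ w₂ : V) (he : H.Adj w₁ w₂)
    (hw₁ : w₁ ≠ v ∧ ¬ H.Adj v w₁) (hw₂ : w₂ ≠ v ∧ ¬ H.Adj v w₂) :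
    (¬ ∃ f : Fin 4 → Option V, Function.Injective f ∧
      ∀ a b : Fin 4, a ≠ b → (cloneMinusEdge H v w₁ w₂).Adj (f a) (f b)) ∧
    (¬ ∃ f : Fin 3 ⊕ Fin 3 → Option V, Function.Injective f ∧
      ∀ a b : Fin 3,
        (cloneMinusEdge H v w₁ w₂).Adj (f (Sum.inl a)) (f (Sum.inr b))) :=
  stmt16_general H hcubic hK4free hK33free v hvnotwin w₁ w₂
end
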